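/- arXiv:math/0406094 — 5 statements merged into one kernel-verified Lean document; each statement's English description precedes it below -/
import Mathlib

section
/- In the circular parking model with n places and n−1 cars, for every k with 1 ≤ k ≤ n−1 the conditional expectation of R_{k,n} given L_{k,n} equals (n − L_{k,n})/(n − k); equivalently, for every integer l, E[ R_{k,n} · 1_{L_{k,n} = l} ] = ((n − l)/(n − k)) · P(L_{k,n} = l). -/
open scoped BigOperators
open Classical Filter Topology

noncomputable section

namespace Parking

/-- The first empty place reached going clockwise from `t` (including `t` itself),
given the set `S` of occupied places. -/
def firstFree {n : ℕ} (S : Finset (ZMod n)) (t : ZMod n) : ZMod n :=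
  if h : ∃ i : ℕ, t + (i : ZMod n) ∉ S then t + ((Nat.find h : ℕ) : ZMod n) else t

/-- `occ t j` : the set of places occupied after the first `j` cars (with first tries
`t 0, …, t (j-1)`) have parked. -/
def occ {n : ℕ} (t : ℕ → ZMod n) : ℕ → Finset (ZMod n)
  | 0 => ∅
  | j + 1 => insert (firstFree (occ t j) (t j)) (occ t j)

/-- The place filled by car `j+1` (0-indexed `j`). -/
def spot {n : ℕ} (t : ℕ → ZMod n) (j : ℕ) : ZMod n :=
  firstFree (occ t j) (t j)

/-- The size of the block whose empty place is `e`, in the configuration with occupied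
set `S`: the empty place `e` together with the maximal run of occupied places
immediately preceding it clockwise. -/
def blockSize {n : ℕ} (S : Finset (ZMod n)) (e : ZMod n) : ℕ :=
  if h : ∃ i : ℕ, e - ((i + 1 : ℕ) : ZMod n) ∉ S then Nat.find h + 1 else 0

/-- The next empty place strictly after `e` clockwise, for occupied set `S`. -/
def nextEmpty {n : ℕ} (S : Finset (ZMod n)) (e : ZMod n) : ZMod n :=
  if h : ∃ i : ℕ, e + ((i + 1 : ℕ) : ZMod n) ∉ S then e + ((Nat.find h + 1 : ℕ) : ZMod n) else e

/-- `L_{j,n}` (1-indexed `j`): the size, just before car `j` parks, of the block whose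
empty place is the place `v_j` filled by car `j`. -/
def Lsize {n : ℕ} (t : ℕ → ZMod n) (j : ℕ) : ℕ :=
  blockSize (occ t (j - 1)) (spot t (j - 1))

/-- `R_{j,n}` (1-indexed `j`): the size, just before car `j` parks, of the block
immediately following (clockwise) the block whose empty place is `v_j`. -/
def Rsize {n : ℕ} (t : ℕ → ZMod n) (j : ℕ) : ℕ :=
  blockSize (occ t (j - 1)) (nextEmpty (occ t (j - 1)) (spot t (j - 1)))

/-- `D_{j,n}` (1-indexed `j`): the displacement of car `j`, i.e. `((v_j - t_j) mod n) + 1`. -/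
def Dsize {n : ℕ} (t : ℕ → ZMod n) (j : ℕ) : ℕ :=
  (spot t (j - 1) - t (j - 1)).val + 1

/-- Extend a finite try-sequence `t : Fin k → Fin n` into a function `ℕ → ZMod n`. -/
def extend (n k : ℕ) (t : Fin k → Fin n) : ℕ → ZMod n :=
  fun j => if h : j < k then ((t ⟨j, h⟩ : ℕ) : ZMod n) else 0

/-- Expectation, under the uniform measure on try-sequences `{0,…,n-1}^k`,
of a real functional of the parking process with `n` places and `k` cars. -/
def expect (n k : ℕ) (X : (ℕ → ZMod n) → ℝ) : ℝ :=
  (∑ t : Fin k → Fin n, X (extend n k t)) / (n : ℝ) ^ k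

/-- Probability, under the uniform measure on try-sequences `{0,…,n-1}^k`, of an event. -/
def prob (n k : ℕ) (P : (ℕ → ZMod n) → Prop) : ℝ :=
  expect n k (fun t => if P t then 1 else 0)

/-- The solution of the additive Smoluchowski equation with monodisperse initial data. -/
def q (k : ℕ) (t : ℝ) : ℝ :=
  ((k : ℝ) * (1 - Real.exp (-t))) ^ (k - 1) * Real.exp (-t) *
    Real.exp (-((k : ℝ) * (1 - Real.exp (-t)))) / (Nat.factorial k)

/-- `emptyPlace S e i`: the `i`-th empty place clockwise starting from `e` (which is
assumed empty), for occupied set `S`. -/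
def emptyPlace {n : ℕ} (S : Finset (ZMod n)) (e : ZMod n) : ℕ → ZMod n
  | 0 => e
  | i + 1 => nextEmpty S (emptyPlace S e i)

/-!
Condition on the configuration met by car `k`: `k - 1` occupied places, whose `n - k + 1` empty
places cut the circle into blocks. Read clockwise from the place `v` that car `k` fills, `L` is
the block ending at `v` and `R` the first block after it. Exchanging two adjacent blocks that
avoid `v`, and relabelling every try by that permutation of places, is an involution of the
sample space; since the permutation moves each occupied run rigidly, the first `k` cars park
exactly as before, up to the relabelling, so `L` is kept and the two block sizes are swapped.
Hence each of the `n - k` blocks other than `L` has the same joint law with `L` as `R`, and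
together they fill the `n - L` remaining places.
-/

open Finset Function

variable {n : ℕ}

section Probes

variable {S : Finset (ZMod n)}

theorem firstFree_eq {x : ZMod n} {d : ℕ} (hd : x + (d : ZMod n) ∉ S)
    (hlt : ∀ i < d, x + (i : ZMod n) ∈ S) : firstFree S x = x + d := by
  have h : ∃ i : ℕ, x + (i : ZMod n) ∉ S := ⟨d, hd⟩
  rw [firstFree, dif_pos h, (Nat.find_eq_iff h).2 ⟨hd, fun i hi => not_not.2 (hlt i hi)⟩]

theorem nextEmpty_eq {e : ZMod n} {d : ℕ} (hd : e + ((d + 1 : ℕ) : ZMod n) ∉ S)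
    (hlt : ∀ i < d, e + ((i + 1 : ℕ) : ZMod n) ∈ S) :
    nextEmpty S e = e + ((d + 1 : ℕ) : ZMod n) := by
  have h : ∃ i : ℕ, e + ((i + 1 : ℕ) : ZMod n) ∉ S := ⟨d, hd⟩
  rw [nextEmpty, dif_pos h, (Nat.find_eq_iff h).2 ⟨hd, fun i hi => not_not.2 (hlt i hi)⟩]

theorem blockSize_eq {e : ZMod n} {d : ℕ} (hd : e - ((d + 1 : ℕ) : ZMod n) ∉ S)
    (hlt : ∀ i < d, e - ((i + 1 : ℕ) : ZMod n) ∈ S) : blockSize S e = d + 1 := by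
  have h : ∃ i : ℕ, e - ((i + 1 : ℕ) : ZMod n) ∉ S := ⟨d, hd⟩
  rw [blockSize, dif_pos h, (Nat.find_eq_iff h).2 ⟨hd, fun i hi => not_not.2 (hlt i hi)⟩]

variable [NeZero n]

theorem firstFree_notMem {w : ZMod n} (hw : w ∉ S) (x : ZMod n) : firstFree S x ∉ S := by
  have h : ∃ i : ℕ, x + (i : ZMod n) ∉ S :=
    ⟨(w - x).val, by simpa [ZMod.natCast_zmod_val]⟩
  rw [firstFree, dif_pos h]
  exact Nat.find_spec h

end Probes

section Vacancies

/-- `vacancy S v i` is the clockwise distance from `v` to the `i`-th empty place of `S`,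
counting `v` itself as the `0`-th when `v ∉ S`; distances are not reduced mod `n`. -/
def vacancy (S : Finset (ZMod n)) (v : ZMod n) : ℕ → ℕ :=
  Nat.nth fun z => v + (z : ZMod n) ∉ S

def gap (S : Finset (ZMod n)) (v : ZMod n) (i : ℕ) : ℕ :=
  vacancy S v (i + 1) - vacancy S v i

variable {S : Finset (ZMod n)} {v : ZMod n}

theorem vacancy_zero (hv : v ∉ S) : vacancy S v 0 = 0 :=
  Nat.nth_zero_of_zero (by simpa using hv)

theorem add_mem_of_vacancy_lt {i z : ℕ} (h₁ : vacancy S v i < z)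
    (h₂ : z < vacancy S v (i + 1)) : v + (z : ZMod n) ∈ S :=
  not_not.1 fun hz => (Nat.le_nth_of_lt_nth_succ h₂ hz).not_gt h₁

variable [NeZero n]

theorem infinite_setOf_vacant (hv : v ∉ S) :
    (Set.ofPred fun z : ℕ => v + (z : ZMod n) ∉ S).Infinite := by
  refine Set.infinite_of_forall_exists_gt fun a => ⟨n * (a + 1), ?_, ?_⟩
  · simpa using hv
  · have := NeZero.one_le (n := n); nlinarith

theorem vacancy_strictMono (hv : v ∉ S) : StrictMono (vacancy S v) :=
  Nat.nth_strictMono (infinite_setOf_vacant hv)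

theorem add_vacancy_notMem (hv : v ∉ S) (i : ℕ) : v + (vacancy S v i : ZMod n) ∉ S :=
  Nat.nth_mem_of_infinite (infinite_setOf_vacant hv) i

theorem vacancy_succ_eq (hv : v ∉ S) {i z : ℕ} (hz : v + (z : ZMod n) ∉ S)
    (hlt : vacancy S v i < z)
    (hgap : ∀ y, vacancy S v i < y → y < z → v + (y : ZMod n) ∈ S) :
    vacancy S v (i + 1) = z := by
  have hi := (vacancy_strictMono hv) (Nat.lt_add_one i)
  refine le_antisymm ?_ ?_
  · by_contra! h
    exact (Nat.le_nth_of_lt_nth_succ h hz).not_gt hlt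
  · by_contra! h
    exact add_vacancy_notMem hv (i + 1) (hgap _ hi h)

theorem vacancy_succ_eq_of_iff {T : Finset (ZMod n)} (hvT : v ∉ T) {σ : ℕ → ℕ}
    (hσ : ∀ z < n, v + (z : ZMod n) ∈ T ↔ v + (σ z : ZMod n) ∈ S) {i z : ℕ} (hz : z < n)
    (hlt : vacancy T v i < z) (hfree : v + (σ z : ZMod n) ∉ S)
    (hgap : ∀ y, vacancy T v i < y → y < z → v + (σ y : ZMod n) ∈ S) :
    vacancy T v (i + 1) = z :=
  vacancy_succ_eq hvT ((hσ z hz).not.2 hfree) hlt fun y h₁ h₂ =>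
    (hσ y (by omega)).2 (hgap y h₁ h₂)

theorem card_filter_range_vacant (v : ZMod n) (S : Finset (ZMod n)) :
    #((range n).filter fun z : ℕ => v + (z : ZMod n) ∉ S) = n - #S := by
  have hcompl := card_compl S
  rw [ZMod.card] at hcompl
  rw [← hcompl]
  refine card_nbij' (fun z => v + z) (fun y => (y - v).val) ?_ ?_ ?_ ?_
  · intro z hz; simp_all
  · intro y hy; simp_all [ZMod.val_lt]
  · intro z hz; simp_all [Nat.mod_eq_of_lt]
  · intro y _; simp

theorem vacancy_card_compl (hv : v ∉ S) : vacancy S v (n - #S) = n := by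
  rw [← card_filter_range_vacant v S, ← Nat.count_eq_card_filter_range]
  exact Nat.nth_count (by simpa using hv)

theorem vacancy_lt_of_lt (hv : v ∉ S) {i : ℕ} (hi : i < n - #S) : vacancy S v i < n :=
  (vacancy_card_compl hv).le.trans_lt' (vacancy_strictMono hv hi)

theorem blockSize_add_vacancy (hv : v ∉ S) (i : ℕ) :
    blockSize S (v + (vacancy S v (i + 1) : ZMod n)) = gap S v i := by
  have hi := (vacancy_strictMono hv) (Nat.lt_add_one i)
  obtain ⟨d, hd⟩ : ∃ d, vacancy S v (i + 1) = vacancy S v i + (d + 1) :=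
    ⟨vacancy S v (i + 1) - vacancy S v i - 1, by omega⟩
  rw [gap, hd, Nat.add_sub_cancel_left]
  refine blockSize_eq ?_ fun r hr => ?_
  · convert add_vacancy_notMem hv i using 2
    push_cast
    ring
  · convert add_mem_of_vacancy_lt (S := S) (v := v) (i := i) (z := vacancy S v i + (d - r))
      (by omega) (by omega) using 1
    push_cast [Nat.cast_sub hr.le]
    ring

theorem nextEmpty_add_vacancy (hv : v ∉ S) (i : ℕ) :
    nextEmpty S (v + (vacancy S v i : ZMod n)) = v + (vacancy S v (i + 1) : ZMod n) := by
  have hi := (vacancy_strictMono hv) (Nat.lt_add_one i)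
  obtain ⟨d, hd⟩ : ∃ d, vacancy S v (i + 1) = vacancy S v i + (d + 1) :=
    ⟨vacancy S v (i + 1) - vacancy S v i - 1, by omega⟩
  rw [hd, Nat.cast_add, ← add_assoc]
  refine nextEmpty_eq ?_ fun r hr => ?_
  · simpa [add_assoc, hd] using add_vacancy_notMem hv (i + 1)
  · simpa [add_assoc] using
      add_mem_of_vacancy_lt (S := S) (v := v) (i := i) (z := vacancy S v i + (r + 1))
        (by omega) (by omega)

theorem blockSize_nextEmpty_self (hv : v ∉ S) : blockSize S (nextEmpty S v) = gap S v 0 := by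
  have h := nextEmpty_add_vacancy hv 0
  rw [vacancy_zero hv, Nat.cast_zero, add_zero] at h
  rw [h, blockSize_add_vacancy hv]

theorem blockSize_self (hv : v ∉ S) (hS : #S < n) :
    blockSize S v = n - vacancy S v (n - #S - 1) := by
  have h := blockSize_add_vacancy hv (n - #S - 1)
  rwa [gap, Nat.sub_add_cancel (by omega : 1 ≤ n - #S), vacancy_card_compl hv,
    ZMod.natCast_self, add_zero] at h

theorem sum_range_gap (hv : v ∉ S) (N : ℕ) : ∑ i ∈ range N, gap S v i = vacancy S v N := by
  simp only [gap]
  rw [Finset.sum_range_tsub (vacancy_strictMono hv).monotone, vacancy_zero hv, Nat.sub_zero]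

end Vacancies

section Occupation

theorem occ_succ (t : ℕ → ZMod n) (j : ℕ) : occ t (j + 1) = insert (spot t j) (occ t j) := rfl

theorem occ_monotone (t : ℕ → ZMod n) : Monotone (occ t) :=
  monotone_nat_of_le_succ fun j => subset_insert (spot t j) (occ t j)

theorem occ_congr {t t' : ℕ → ZMod n} {j : ℕ} (h : ∀ i < j, t i = t' i) :
    occ t j = occ t' j := by
  induction j with
  | zero => rfl
  | succ j ih =>
    rw [occ_succ, occ_succ, spot, spot, ih fun i hi => h i (by omega), h j (by omega)]

theorem spot_congr {t t' : ℕ → ZMod n} {j : ℕ} (h : ∀ i ≤ j, t i = t' i) :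
    spot t j = spot t' j := by
  rw [spot, spot, occ_congr fun i hi => h i hi.le, h j le_rfl]

variable [NeZero n]

theorem exists_notMem_of_card_lt {S : Finset (ZMod n)} (h : #S < n) : ∃ w, w ∉ S := by
  obtain ⟨w, -, hw⟩ := exists_mem_notMem_of_card_lt_card (t := univ) (s := S)
    (by rwa [card_univ, ZMod.card])
  exact ⟨w, hw⟩

theorem card_occ (t : ℕ → ZMod n) {j : ℕ} (hj : j ≤ n) : #(occ t j) = j := by
  induction j with
  | zero => rfl
  | succ j ih =>
    obtain ⟨w, hw⟩ := exists_notMem_of_card_lt (S := occ t j) (by rw [ih (by omega)]; omega)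
    rw [occ_succ, card_insert_of_notMem (s := occ t j) (a := spot t j) (firstFree_notMem hw _),
      ih (by omega)]

theorem spot_notMem_occ (t : ℕ → ZMod n) {j : ℕ} (hj : j < n) : spot t j ∉ occ t j := by
  obtain ⟨w, hw⟩ := exists_notMem_of_card_lt (by rwa [card_occ t hj.le])
  exact firstFree_notMem hw _

end Occupation

section Equivariance

variable [NeZero n] {π : ZMod n → ZMod n}

theorem firstFree_image (hπ : Injective π) {S : Finset (ZMod n)}
    (hstep : ∀ y ∈ S, π (y + 1) = π y + 1) {w : ZMod n} (hw : w ∉ S) (x : ZMod n) :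
    firstFree (S.image π) (π x) = π (firstFree S x) := by
  have h : ∃ i : ℕ, x + (i : ZMod n) ∉ S :=
    ⟨(w - x).val, by simpa [ZMod.natCast_zmod_val]⟩
  have hocc : ∀ i < Nat.find h, x + (i : ZMod n) ∈ S :=
    fun i hi => not_not.1 (Nat.find_min h hi)
  have hrun : ∀ i ≤ Nat.find h, π (x + i) = π x + i := by
    intro i hi
    induction i with
    | zero => simp
    | succ i ih =>
      rw [Nat.cast_succ, ← add_assoc, hstep _ (hocc i hi), ih (by omega), add_assoc]
  rw [firstFree_eq (Nat.find_spec h) hocc, hrun _ le_rfl]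
  refine firstFree_eq ?_ fun i hi => ?_
  · rw [← hrun _ le_rfl, hπ.mem_finset_image]
    exact Nat.find_spec h
  · rw [← hrun i hi.le, hπ.mem_finset_image]
    exact hocc i hi

variable (hπ : Injective π) {t : ℕ → ZMod n} {K : ℕ} (hK : K < n)
  (hstep : ∀ y ∈ occ t K, π (y + 1) = π y + 1)
include hπ hK hstep

theorem occ_comp {j : ℕ} (hj : j ≤ K) : occ (π ∘ t) j = (occ t j).image π := by
  induction j with
  | zero => simp [occ]
  | succ j ih =>
    have hstep' : ∀ y ∈ occ t j, π (y + 1) = π y + 1 :=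
      fun y hy => hstep y (occ_monotone t (by omega) hy)
    rw [occ_succ, occ_succ, spot, spot, ih (by omega), Function.comp_apply,
      firstFree_image hπ hstep' (spot_notMem_occ t (by omega)), image_insert]

theorem spot_comp : spot (π ∘ t) K = π (spot t K) := by
  rw [spot, occ_comp hπ hK hstep le_rfl]
  exact firstFree_image hπ hstep (spot_notMem_occ t hK) (t K)

end Equivariance

section SwapArcs

def swapIntervals (a b c x : ℕ) : ℕ :=
  if a < x ∧ x ≤ b then x + (c - b) else if b < x ∧ x ≤ c then x - (b - a) else x

variable {a b c x : ℕ}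

theorem swapIntervals_of_le (h : x ≤ a) : swapIntervals a b c x = x := by
  unfold swapIntervals; split_ifs <;> omega

theorem swapIntervals_of_lt (h : c < x) : swapIntervals a b c x = x := by
  unfold swapIntervals; split_ifs <;> omega

theorem swapIntervals_of_mem_left (h₁ : a < x) (h₂ : x ≤ b) :
    swapIntervals a b c x = x + (c - b) := by
  unfold swapIntervals; split_ifs <;> omega

theorem swapIntervals_of_mem_right (h₁ : b < x) (h₂ : x ≤ c) :
    swapIntervals a b c x = x - (b - a) := by
  unfold swapIntervals; split_ifs <;> omega

theorem swapIntervals_swapIntervals (hab : a ≤ b) (hbc : b ≤ c) (x : ℕ) :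
    swapIntervals a (a + c - b) c (swapIntervals a b c x) = x := by
  unfold swapIntervals; split_ifs <;> omega

theorem swapIntervals_lt {m : ℕ} (hc : c < m) (hx : x < m) : swapIntervals a b c x < m := by
  unfold swapIntervals; split_ifs <;> omega

theorem swapIntervals_add_one (hab : a ≤ b) (hbc : b ≤ c) (ha : x ≠ a) (hb : x ≠ b)
    (hc : x ≠ c) : swapIntervals a b c (x + 1) = swapIntervals a b c x + 1 := by
  unfold swapIntervals; split_ifs <;> omega

def swapArcs (a b c : ℕ) (v y : ZMod n) : ZMod n :=
  v + (swapIntervals a b c (y - v).val : ZMod n)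

variable {v : ZMod n}

theorem swapArcs_add_natCast {z : ℕ} (hz : z < n) :
    swapArcs a b c v (v + z) = v + (swapIntervals a b c z : ZMod n) := by
  rw [swapArcs, add_sub_cancel_left, ZMod.val_cast_of_lt hz]

variable [NeZero n]

theorem swapArcs_self : swapArcs a b c v v = v := by
  simpa [swapIntervals_of_le] using swapArcs_add_natCast (a := a) (b := b) (c := c) (v := v)
    (NeZero.pos n)

theorem swapArcs_swapArcs (hab : a ≤ b) (hbc : b ≤ c) (hc : c < n) (y : ZMod n) :
    swapArcs a (a + c - b) c v (swapArcs a b c v y) = y := by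
  have hlt := swapIntervals_lt (a := a) (b := b) hc (ZMod.val_lt (y - v))
  rw [show swapArcs a b c v y = v + (swapIntervals a b c (y - v).val : ZMod n) from rfl,
    swapArcs_add_natCast hlt, swapIntervals_swapIntervals hab hbc,
    ZMod.natCast_zmod_val, add_sub_cancel]

theorem swapArcs_injective (hab : a ≤ b) (hbc : b ≤ c) (hc : c < n) :
    Injective (swapArcs a b c v) :=
  LeftInverse.injective (swapArcs_swapArcs (v := v) hab hbc hc)

theorem mem_image_swapArcs (hab : a ≤ b) (hbc : b ≤ c) (hc : c < n) {S : Finset (ZMod n)}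
    {z : ℕ} (hz : z < n) :
    v + (z : ZMod n) ∈ S.image (swapArcs a b c v) ↔
      v + (swapIntervals a (a + c - b) c z : ZMod n) ∈ S := by
  have hinv : swapArcs a b c v (swapArcs a (a + c - b) c v (v + z)) = v + z := by
    have hb : a + c - (a + c - b) = b := by omega
    simpa only [hb] using
      swapArcs_swapArcs (a := a) (b := a + c - b) (c := c) (v := v) (by omega) (by omega) hc
        (v + z)
  rw [← swapArcs_add_natCast hz, ← hinv, (swapArcs_injective hab hbc hc).mem_finset_image,
    hinv]

theorem swapArcs_add_one (hab : a ≤ b) (hbc : b ≤ c) (hc : c < n) {y : ZMod n}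
    (ha : (y - v).val ≠ a) (hb : (y - v).val ≠ b) (hc' : (y - v).val ≠ c) :
    swapArcs a b c v (y + 1) = swapArcs a b c v y + 1 := by
  obtain ⟨z, hz, rfl⟩ : ∃ z < n, y = v + z :=
    ⟨(y - v).val, ZMod.val_lt _, by rw [ZMod.natCast_zmod_val, add_sub_cancel]⟩
  rw [add_sub_cancel_left, ZMod.val_cast_of_lt hz] at ha hb hc'
  rw [swapArcs_add_natCast hz]
  rcases Nat.lt_or_ge (z + 1) n with hz1 | hz1
  · rw [add_assoc, ← Nat.cast_add_one, swapArcs_add_natCast hz1,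
      swapIntervals_add_one hab hbc ha hb hc', Nat.cast_add_one, add_assoc]
  · -- the step from distance `n - 1` to `v` wraps around, but both ends lie outside `(a, c]`
    have hzn : z + 1 = n := by omega
    rw [add_assoc, ← Nat.cast_add_one, hzn, ZMod.natCast_self, add_zero, swapArcs_self,
      swapIntervals_of_lt (by omega), add_assoc, ← Nat.cast_add_one, hzn, ZMod.natCast_self,
      add_zero]

end SwapArcs

section SwapBlocks

def swapBlocks (S : Finset (ZMod n)) (v : ZMod n) (j : ℕ) : ZMod n → ZMod n :=
  swapArcs (vacancy S v j) (vacancy S v (j + 1)) (vacancy S v (j + 2)) v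

variable [NeZero n] {S : Finset (ZMod n)} {v : ZMod n} {j : ℕ}

theorem vacancy_lt_succ_succ (hv : v ∉ S) :
    vacancy S v j < vacancy S v (j + 1) ∧ vacancy S v (j + 1) < vacancy S v (j + 2) :=
  ⟨vacancy_strictMono hv (by omega), vacancy_strictMono hv (by omega)⟩

variable (hv : v ∉ S) (hc : vacancy S v (j + 2) < n)
include hv hc

theorem swapBlocks_injective : Injective (swapBlocks S v j) :=
  have h := vacancy_lt_succ_succ (j := j) hv
  swapArcs_injective h.1.le h.2.le hc

theorem swapBlocks_add_one {y : ZMod n} (hy : y ∈ S) :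
    swapBlocks S v j (y + 1) = swapBlocks S v j y + 1 := by
  have h := vacancy_lt_succ_succ (j := j) hv
  have hne : ∀ i, (y - v).val ≠ vacancy S v i := fun i hi => add_vacancy_notMem hv i <| by
    rwa [← hi, ZMod.natCast_zmod_val, add_sub_cancel]
  exact swapArcs_add_one h.1.le h.2.le hc (hne j) (hne (j + 1)) (hne (j + 2))

theorem mem_image_swapBlocks {z : ℕ} (hz : z < n) :
    v + (z : ZMod n) ∈ S.image (swapBlocks S v j) ↔ v + (swapIntervals (vacancy S v j)
      (vacancy S v j + vacancy S v (j + 2) - vacancy S v (j + 1)) (vacancy S v (j + 2)) z :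
        ZMod n) ∈ S :=
  have h := vacancy_lt_succ_succ (j := j) hv
  mem_image_swapArcs h.1.le h.2.le hc hz

theorem notMem_image_swapBlocks : v ∉ S.image (swapBlocks S v j) := fun h => hv <| by
  simpa [swapIntervals_of_le] using
    (mem_image_swapBlocks hv hc (NeZero.pos n)).1 (by simpa using h)

theorem vacancy_image_swapBlocks {i : ℕ} (hi : vacancy S v i < n) :
    vacancy (S.image (swapBlocks S v j)) v i = if i = j + 1 then
      vacancy S v j + vacancy S v (j + 2) - vacancy S v (j + 1) else vacancy S v i := by
  have he := vacancy_strictMono hv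
  obtain ⟨hab, hbc⟩ := vacancy_lt_succ_succ (j := j) hv
  have hvT := notMem_image_swapBlocks hv hc
  have step := fun {i z : ℕ} => vacancy_succ_eq_of_iff (i := i) (z := z) hvT
    fun _ hz => mem_image_swapBlocks hv hc hz
  set σ := swapIntervals (vacancy S v j)
    (vacancy S v j + vacancy S v (j + 2) - vacancy S v (j + 1)) (vacancy S v (j + 2)) with hσ
  induction i with
  | zero => rw [vacancy_zero hvT, if_neg (by omega), vacancy_zero hv]
  | succ i ih =>
    have hlt := he (Nat.lt_add_one i)
    specialize ih (hlt.trans hi)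
    by_cases hout : i + 1 ≤ j ∨ j + 2 ≤ i
    · have hfix : ∀ y, vacancy S v i < y → y ≤ vacancy S v (i + 1) → σ y = y := by
        intro y h₁ h₂
        rcases hout with h | h
        · exact swapIntervals_of_le (h₂.trans (he.monotone h))
        · exact swapIntervals_of_lt ((he.monotone h).trans_lt h₁)
      rw [if_neg (by omega)] at ih ⊢
      refine step hi (by omega) ?_ fun y h₁ h₂ => ?_
      · rw [hfix _ hlt le_rfl]
        exact add_vacancy_notMem hv _
      · rw [ih] at h₁
        rw [hfix y h₁ h₂.le]
        exact add_mem_of_vacancy_lt h₁ h₂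
    rcases (by omega : i = j ∨ i = j + 1) with rfl | rfl
    · rw [if_neg (by omega)] at ih
      rw [if_pos rfl]
      refine step (by omega) (by omega) ?_ fun y h₁ h₂ => ?_ <;> rw [hσ]
      · rw [swapIntervals_of_mem_left (by omega) le_rfl]
        convert add_vacancy_notMem hv (i + 2) using 4
        omega
      · rw [swapIntervals_of_mem_left (by omega) (by omega)]
        exact add_mem_of_vacancy_lt (i := i + 1) (by omega)
          (by simp only [add_assoc, Nat.reduceAdd]; omega)
    · rw [if_pos rfl] at ih
      show _ = if j + 2 = j + 1 then _ else vacancy S v (j + 2)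
      rw [if_neg (by omega)]
      refine step hc (by omega) ?_ fun y h₁ h₂ => ?_ <;> rw [hσ]
      · rw [swapIntervals_of_mem_right (by omega) le_rfl]
        convert add_vacancy_notMem hv (j + 1) using 4
        omega
      · rw [swapIntervals_of_mem_right (by omega) (by omega)]
        exact add_mem_of_vacancy_lt (i := j) (by omega) (by omega)

theorem gap_image_swapBlocks : gap (S.image (swapBlocks S v j)) v j = gap S v (j + 1) := by
  obtain ⟨hab, hbc⟩ := vacancy_lt_succ_succ (j := j) hv
  rw [gap, vacancy_image_swapBlocks hv hc (by omega), vacancy_image_swapBlocks hv hc (by omega),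
    if_pos rfl, if_neg (by omega), gap]
  show _ = vacancy S v (j + 2) - _
  omega

theorem swapBlocks_image_swapBlocks (y : ZMod n) :
    swapBlocks (S.image (swapBlocks S v j)) v j (swapBlocks S v j y) = y := by
  obtain ⟨hab, hbc⟩ := vacancy_lt_succ_succ (j := j) hv
  rw [swapBlocks, vacancy_image_swapBlocks hv hc (by omega),
    vacancy_image_swapBlocks hv hc (by omega), vacancy_image_swapBlocks hv hc hc,
    if_neg (by omega), if_pos rfl, if_neg (by omega)]
  exact swapArcs_swapArcs hab.le hbc.le hc y

end SwapBlocks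

theorem blockSize_image_swapBlocks [NeZero n] {S : Finset (ZMod n)} {v : ZMod n} {j : ℕ}
    (hv : v ∉ S) (hj : j + 2 < n - #S) :
    blockSize (S.image (swapBlocks S v j)) v = blockSize S v := by
  have hc := vacancy_lt_of_lt hv hj
  have hcard : #(S.image (swapBlocks S v j)) = #S :=
    card_image_of_injective S (swapBlocks_injective hv hc)
  rw [blockSize_self (notMem_image_swapBlocks hv hc) (by omega), blockSize_self hv (by omega),
    hcard, vacancy_image_swapBlocks hv hc (vacancy_lt_of_lt hv (by omega)), if_neg (by omega)]

section CarGaps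

def carGap (t : ℕ → ZMod n) (k i : ℕ) : ℕ :=
  gap (occ t (k - 1)) (spot t (k - 1)) i

variable [NeZero n] {k : ℕ}

theorem Rsize_eq_carGap (t : ℕ → ZMod n) (hk : k ≤ n) : Rsize t k = carGap t k 0 :=
  blockSize_nextEmpty_self (spot_notMem_occ t (by have := NeZero.pos n; omega))

theorem sum_carGap_add_Lsize (t : ℕ → ZMod n) (hk₁ : 1 ≤ k) (hk : k ≤ n) :
    ∑ i ∈ range (n - k), carGap t k i + Lsize t k = n := by
  have hv := spot_notMem_occ t (j := k - 1) (by omega)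
  have hcard := card_occ t (j := k - 1) (by omega)
  have hlt := vacancy_lt_of_lt hv (i := n - k) (by omega)
  rw [Lsize, blockSize_self hv (by omega), hcard, show n - (k - 1) - 1 = n - k by omega]
  simp only [carGap]
  rw [sum_range_gap hv]
  omega

end CarGaps

section Relabel

variable [NeZero n] {m : ℕ}

def relabel (π : ZMod n → ZMod n) (t : Fin m → Fin n) : Fin m → Fin n :=
  fun i => ⟨(π (t i : ℕ)).val, ZMod.val_lt _⟩

theorem extend_relabel (π : ZMod n → ZMod n) (t : Fin m → Fin n) {i : ℕ} (hi : i < m) :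
    extend n m (relabel π t) i = π (extend n m t i) := by
  simp [extend, hi, relabel]

theorem relabel_relabel {π π' : ZMod n → ZMod n} (h : ∀ y, π' (π y) = y)
    (t : Fin m → Fin n) : relabel π' (relabel π t) = t := by
  funext i
  ext
  simp [relabel, h, Nat.mod_eq_of_lt]

def swapTries (k j : ℕ) (t : Fin m → Fin n) : Fin m → Fin n :=
  relabel (swapBlocks (occ (extend n m t) (k - 1)) (spot (extend n m t) (k - 1)) j) t

variable {k j : ℕ} (hk₁ : 1 ≤ k) (hkm : k ≤ m) (hkn : k ≤ n) (hj : j + 2 ≤ n - k)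
include hk₁ hkm hkn hj

theorem occ_spot_swapTries (t : Fin m → Fin n) :
    occ (extend n m (swapTries k j t)) (k - 1) =
      (occ (extend n m t) (k - 1)).image
        (swapBlocks (occ (extend n m t) (k - 1)) (spot (extend n m t) (k - 1)) j) ∧
    spot (extend n m (swapTries k j t)) (k - 1) = spot (extend n m t) (k - 1) := by
  set S := occ (extend n m t) (k - 1)
  set v := spot (extend n m t) (k - 1)
  have hv : v ∉ S := spot_notMem_occ _ (by omega)
  have hc := vacancy_lt_of_lt hv (i := j + 2) (by rw [card_occ _ (by omega)]; omega)
  have hπ := swapBlocks_injective hv hc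
  have hstep : ∀ y ∈ S, swapBlocks S v j (y + 1) = swapBlocks S v j y + 1 :=
    fun y hy => swapBlocks_add_one hv hc hy
  have hagree : ∀ i ≤ k - 1,
      extend n m (swapTries k j t) i = (swapBlocks S v j ∘ extend n m t) i :=
    fun i hi => extend_relabel _ t (by omega)
  constructor
  · rw [occ_congr fun i hi => hagree i hi.le]
    exact occ_comp hπ (by omega) hstep le_rfl
  · rw [spot_congr hagree, spot_comp hπ (by omega) hstep]
    exact swapArcs_self

theorem carGap_swapTries (t : Fin m → Fin n) :
    carGap (extend n m (swapTries k j t)) k j = carGap (extend n m t) k (j + 1) := by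
  have hv := spot_notMem_occ (extend n m t) (j := k - 1) (by omega)
  have hc := vacancy_lt_of_lt hv (i := j + 2) (by rw [card_occ _ (by omega)]; omega)
  obtain ⟨hocc, hspot⟩ := occ_spot_swapTries hk₁ hkm hkn hj t
  rw [carGap, carGap, hocc, hspot]
  exact gap_image_swapBlocks hv hc

theorem Lsize_swapTries (t : Fin m → Fin n) :
    Lsize (extend n m (swapTries k j t)) k = Lsize (extend n m t) k := by
  have hv := spot_notMem_occ (extend n m t) (j := k - 1) (by omega)
  obtain ⟨hocc, hspot⟩ := occ_spot_swapTries hk₁ hkm hkn hj t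
  rw [Lsize, Lsize, hocc, hspot]
  exact blockSize_image_swapBlocks hv (by rw [card_occ _ (by omega)]; omega)

theorem swapTries_involutive : Involutive (swapTries (n := n) (m := m) k j) := fun t => by
  have hv := spot_notMem_occ (extend n m t) (j := k - 1) (by omega)
  have hc := vacancy_lt_of_lt hv (i := j + 2) (by rw [card_occ _ (by omega)]; omega)
  obtain ⟨hocc, hspot⟩ := occ_spot_swapTries hk₁ hkm hkn hj t
  rw [swapTries, hocc, hspot]
  exact relabel_relabel (swapBlocks_image_swapBlocks hv hc) t

theorem sum_carGap_succ_mul (g : ℕ → ℝ) :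
    ∑ t : Fin m → Fin n, (carGap (extend n m t) k (j + 1) : ℝ) * g (Lsize (extend n m t) k) =
      ∑ t : Fin m → Fin n, (carGap (extend n m t) k j : ℝ) * g (Lsize (extend n m t) k) :=
  Fintype.sum_equiv (swapTries_involutive hk₁ hkm hkn hj).toPerm _ _ fun t => by
    rw [Involutive.coe_toPerm, carGap_swapTries hk₁ hkm hkn hj,
      Lsize_swapTries hk₁ hkm hkn hj]

end Relabel

section Exchangeability

variable [NeZero n] {m k : ℕ} (hk₁ : 1 ≤ k) (hkm : k ≤ m) (hkn : k ≤ n)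
include hk₁ hkm hkn

theorem sum_carGap_mul (g : ℕ → ℝ) {j : ℕ} (hj : j < n - k) :
    ∑ t : Fin m → Fin n, (carGap (extend n m t) k j : ℝ) * g (Lsize (extend n m t) k) =
      ∑ t : Fin m → Fin n, (Rsize (extend n m t) k : ℝ) * g (Lsize (extend n m t) k) := by
  induction j with
  | zero => simp only [Rsize_eq_carGap _ hkn]
  | succ j ih => rw [sum_carGap_succ_mul hk₁ hkm hkn (by omega), ih (by omega)]

theorem sub_mul_sum_Rsize_mul (g : ℕ → ℝ) :
    ((n : ℝ) - k) *
        ∑ t : Fin m → Fin n, (Rsize (extend n m t) k : ℝ) * g (Lsize (extend n m t) k) =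
      ∑ t : Fin m → Fin n,
        ((n : ℝ) - Lsize (extend n m t) k) * g (Lsize (extend n m t) k) := by
  calc _ = ∑ j ∈ range (n - k), ∑ t : Fin m → Fin n,
          (carGap (extend n m t) k j : ℝ) * g (Lsize (extend n m t) k) := by
        rw [sum_congr rfl fun j hj => sum_carGap_mul hk₁ hkm hkn g (mem_range.1 hj), sum_const,
          card_range, nsmul_eq_mul, Nat.cast_sub hkn]
    _ = _ := by
        rw [sum_comm]
        refine sum_congr rfl fun t _ => ?_
        have h : ∑ j ∈ range (n - k), (carGap (extend n m t) k j : ℝ) =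
            n - Lsize (extend n m t) k := by
          rw [eq_sub_iff_add_eq]
          exact_mod_cast sum_carGap_add_Lsize (extend n m t) hk₁ hkn
        rw [← sum_mul, h]

theorem sub_mul_sum_Rsize_mul_indicator (l : ℕ) :
    ((n : ℝ) - k) * ∑ t : Fin m → Fin n,
        (Rsize (extend n m t) k : ℝ) * (if Lsize (extend n m t) k = l then 1 else 0) =
      ((n : ℝ) - l) * ∑ t : Fin m → Fin n, (if Lsize (extend n m t) k = l then 1 else 0) := by
  refine (sub_mul_sum_Rsize_mul hk₁ hkm hkn fun L => if L = l then 1 else 0).trans ?_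
  rw [mul_sum]
  refine sum_congr rfl fun t _ => ?_
  split_ifs with h <;> simp [h]

end Exchangeability

/-- `E[R_{k,n} | L_{k,n}] = (n - L_{k,n})/(n - k)`, i.e. for every `l`,
`E[R_{k,n} · 1_{L_{k,n} = l}] = ((n - l)/(n - k)) · P(L_{k,n} = l)`. -/
theorem cond_exp_R_given_L (n k : ℕ) (hk1 : 1 ≤ k) (hk2 : k ≤ n - 1) (l : ℕ) :
    expect n (n - 1) (fun t => (Rsize t k : ℝ) * (if Lsize t k = l then 1 else 0))
      = (((n : ℝ) - l) / ((n : ℝ) - k)) * prob n (n - 1) (fun t => Lsize t k = l) := by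
  have : NeZero n := ⟨by omega⟩
  have hnk : (n : ℝ) - k ≠ 0 := sub_ne_zero.2 (by exact_mod_cast (by omega : n ≠ k))
  have key := sub_mul_sum_Rsize_mul_indicator (n := n) (m := n - 1) hk1 hk2 (by omega) l
  rw [expect, prob, expect, div_mul_div_comm, ← mul_div_mul_left _ _ hnk]
  convert congrArg (· / (((n : ℝ) - k) * n ^ (n - 1))) key using 5

end Parking
end
end

section
/- For every fixed integer k ≥ 1, lim_{m→∞} binom(m−2, m−k−1) · (m−k)^{m−k−1} · k^{k−2} / m^{m−2} = k^{k−1} e^{−k} / k!. (The left-hand side is the probability p_{m,m−k} that the block following the place filled by the last car in a circular parking of m−1 cars on m places has size k; the right-hand side is the Borel distribution with parameter 1.) -/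
open scoped BigOperators
open Classical Filter Topology

noncomputable section

namespace Parking

lemma aux1 (c : ℕ) : Tendsto (fun m : ℕ => ((m - c : ℕ) : ℝ) / m) atTop (𝓝 1) := by
  have h : Tendsto (fun m : ℕ => 1 - (c : ℝ) / m) atTop (𝓝 1) := by
    have := (tendsto_const_nhds (x := (1:ℝ)) (f := atTop)).sub
      (tendsto_const_div_atTop_nhds_zero_nat (c : ℝ))
    simpa using this
  refine h.congr' ?_
  filter_upwards [eventually_ge_atTop c, eventually_gt_atTop 0] with m hm hm0
  have hm0' : (m : ℝ) ≠ 0 := Nat.cast_ne_zero.mpr hm0.ne'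
  rw [Nat.cast_sub hm]
  field_simp

lemma aux2 (k : ℕ) (hk : 1 ≤ k) :
    Tendsto (fun m : ℕ => (((m - k : ℕ) : ℝ) / m) ^ (m - k - 1)) atTop
      (𝓝 (Real.exp (-(k : ℝ)))) := by
  have hbase : Tendsto (fun m : ℕ => 1 + (-(k : ℝ)) / m) atTop (𝓝 1) := by
    have := (tendsto_const_nhds (x := (1:ℝ)) (f := atTop)).add
      (tendsto_const_div_atTop_nhds_zero_nat (-(k : ℝ)))
    simpa using this
  have h1 : Tendsto (fun m : ℕ => (1 + (-(k : ℝ)) / m) ^ m) atTop (𝓝 (Real.exp (-(k:ℝ)))) :=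
    Real.tendsto_one_add_div_pow_exp (-(k : ℝ))
  have h2 : Tendsto (fun m : ℕ => (1 + (-(k : ℝ)) / m) ^ (k + 1)) atTop (𝓝 1) := by
    simpa using hbase.pow (k + 1)
  have h3 := h1.div h2 one_ne_zero
  rw [div_one] at h3
  refine h3.congr' ?_
  filter_upwards [eventually_ge_atTop (k + 1)] with m hm
  have hm0 : (0:ℝ) < m := by exact_mod_cast Nat.lt_of_lt_of_le k.succ_pos hm
  have hkm : (k : ℝ) < m := by exact_mod_cast Nat.lt_of_lt_of_le (Nat.lt_succ_self k) hm
  have hbne : ((m : ℝ) - k) / m ≠ 0 := by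
    apply div_ne_zero <;> [linarith; linarith]
  have heq : 1 + (-(k : ℝ)) / m = ((m : ℝ) - k) / m := by field_simp; ring
  simp only [Pi.div_apply]
  rw [heq, show m - k - 1 = m - (k + 1) by omega, Nat.cast_sub (by omega),
    pow_sub₀ _ hbne (by omega), div_eq_mul_inv]

/-- for fixed `k ≥ 1`,
`binom(m-2, m-k-1) · (m-k)^{m-k-1} · k^{k-2} / m^{m-2} → k^{k-1} e^{-k} / k!` as `m → ∞`
(the Borel distribution). -/
theorem borel_limit (k : ℕ) (hk : 1 ≤ k) :
    Tendsto (fun m : ℕ =>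
        (((m - 2).choose (m - k - 1) * (m - k) ^ (m - k - 1) * k ^ (k - 2) : ℕ) : ℝ)
          / (m : ℝ) ^ (m - 2))
      atTop (𝓝 ((k : ℝ) ^ (k - 1) * Real.exp (-(k : ℝ)) / (Nat.factorial k))) := by
  have hfac : ((k - 1).factorial : ℝ) ≠ 0 := by positivity
  have hg : Tendsto (fun m : ℕ =>
      (∏ i ∈ Finset.range (k - 1), ((m - (2 + i) : ℕ) : ℝ) / m) *
        ((((m - k : ℕ) : ℝ) / m) ^ (m - k - 1)) *
        ((k : ℝ) ^ (k - 2) / ((k - 1).factorial : ℝ)))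
      atTop (𝓝 ((k : ℝ) ^ (k - 1) * Real.exp (-(k : ℝ)) / (Nat.factorial k))) := by
    have hprod : Tendsto (fun m : ℕ =>
        ∏ i ∈ Finset.range (k - 1), ((m - (2 + i) : ℕ) : ℝ) / m) atTop (𝓝 1) := by
      have := tendsto_finset_prod (Finset.range (k - 1))
        (f := fun i (m : ℕ) => ((m - (2 + i) : ℕ) : ℝ) / m) (x := atTop)
        (a := fun _ => 1) (fun i _ => aux1 (2 + i))
      simpa using this
    have := (hprod.mul (aux2 k hk)).mul tendsto_const_nhds
      (b := (k : ℝ) ^ (k - 2) / ((k - 1).factorial : ℝ))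
    convert this using 2
    have hkk : (k : ℝ) ^ (k - 1) = (k : ℝ) ^ (k - 2) * k := by
      rcases Nat.lt_or_ge k 2 with h | h
      · interval_cases k <;> norm_num
      · rw [← pow_succ, show k - 2 + 1 = k - 1 by omega]
    have hfk : (k.factorial : ℝ) = k * (k - 1).factorial := by
      rw [show k = (k - 1) + 1 by omega, Nat.factorial_succ]
      push_cast [show k - 1 + 1 = k by omega]
      ring
    rw [hkk, hfk]
    have hk0 : (k : ℝ) ≠ 0 := by positivity
    field_simp
  refine hg.congr' ?_
  filter_upwards [eventually_ge_atTop (k + 2)] with m hm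
  have hm0 : (m : ℝ) ≠ 0 := Nat.cast_ne_zero.mpr (by omega)
  -- rewrite the choose
  have hch : (m - 2).choose (m - k - 1) = (m - 2).choose (k - 1) := by
    rw [show m - k - 1 = (m - 2) - (k - 1) by omega]
    exact Nat.choose_symm (by omega)
  have hdesc : (m - 2).choose (k - 1) * (k - 1).factorial = (m - 2).descFactorial (k - 1) := by
    rw [Nat.descFactorial_eq_factorial_mul_choose]; ring
  have hdp : (m - 2).descFactorial (k - 1) = ∏ i ∈ Finset.range (k - 1), (m - (2 + i)) := by
    rw [Nat.descFactorial_eq_prod_range]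
    exact Finset.prod_congr rfl fun i _ => by omega
  have hchR : ((m - 2).choose (k - 1) : ℝ) =
      (∏ i ∈ Finset.range (k - 1), ((m - (2 + i) : ℕ) : ℝ)) / ((k - 1).factorial : ℝ) := by
    rw [eq_div_iff hfac]
    exact_mod_cast hdesc.trans hdp
  have hpow : (m : ℝ) ^ (m - 2) = (m : ℝ) ^ (k - 1) * (m : ℝ) ^ (m - k - 1) := by
    rw [← pow_add, show k - 1 + (m - k - 1) = m - 2 by omega]
  have hprodsplit : ∏ i ∈ Finset.range (k - 1), (((m - (2 + i) : ℕ) : ℝ) / m) =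
      (∏ i ∈ Finset.range (k - 1), ((m - (2 + i) : ℕ) : ℝ)) / (m : ℝ) ^ (k - 1) := by
    rw [Finset.prod_div_distrib, Finset.prod_const, Finset.card_range]
  rw [hprodsplit, div_pow]
  push_cast [hch, hchR, hpow]
  ring


end Parking
end
end

section
/- For every real t ≥ 0, the following three identities hold, all series converging: Σ_{k=1}^{∞} k · q(k,t) = 1 (conservation of mass), Σ_{k=1}^{∞} q(k,t) = e^{−t} (total concentration), and Σ_{k=1}^{∞} k² · q(k,t) = e^{2t} (second moment). -/
open scoped BigOperators
open Classical Filter Topology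

noncomputable section

/-!
With `μ = 1 - e^{-t} ∈ [0, 1)` we have `q k t = e^{-t} · B_μ(k)`, where
`B_μ(k) = (kμ)^{k-1} e^{-kμ} / k!` is the Borel distribution, so the three identities say that
the moments of order `0, 1, 2` of `B_μ` are `1`, `(1 - μ)⁻¹` and `(1 - μ)⁻³`.

For small complex `z`, expanding `e^{-kz}` and regrouping turns `∑ k^p B_z(k)` into a power
series whose `n`-th coefficient is `Δ^{n+1}[x^{n+p}](0) / (n+1)!`, which is `0`, `1` and
`C(n+2, 2)` for `p = 0, 1, 2` (apart from the constant term for `p = 0`): these are the power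
series of `1`, `(1 - z)⁻¹` and `(1 - z)⁻³`. The moment series converge locally uniformly on
`{z | e^{1 - Re z} |z| < 1}`, an open set containing `[0, 1)`, so they are analytic there and the
identities propagate from a neighbourhood of `0` to `[0, 1)` by the identity theorem along the
real segment.
-/

open Finset Nat
open fwdDiff

theorem fwdDiff_iter_pow_succ {R : Type*} [CommRing R] (m : ℕ) :
    (Δ_[1])^[m] (fun r : R ↦ r ^ (m + 1)) =
      fun y ↦ (m ! : R) * ((m + 1) * y + (m + 1).choose 2) := by
  induction m with
  | zero => ext y; simp
  | succ m ih =>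
    have hΔ : (Δ_[1] fun r : R ↦ r ^ (m + 2)) =
        ∑ i ∈ range (m + 2), (m + 2).choose i • fun r ↦ r ^ i := by
      ext x
      simp [nsmul_eq_mul, fwdDiff, add_pow, sum_range_succ, mul_comm]
    have hc₁ : (m + 2).choose (m + 1) = m + 2 := choose_succ_self_right (m + 1)
    have hc₂ : (m + 2).choose 2 = (m + 1).choose 2 + (m + 1) := by
      rw [choose_succ_succ', choose_one_right, add_comm]
    have hc₃ : 2 * (m + 1).choose 2 = (m + 1) * m := by
      rw [choose_two_right, add_tsub_cancel_right]
      exact Nat.mul_div_cancel' (even_mul_pred_self _).two_dvd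
    ext y
    rw [Function.iterate_succ_apply, hΔ, fwdDiff_iter_finsetSum, Finset.sum_apply,
      sum_range_succ, sum_range_succ, sum_eq_zero fun i hi ↦ ?_, fwdDiff_iter_const_smul,
      fwdDiff_iter_const_smul, Pi.smul_apply, Pi.smul_apply, ih, fwdDiff_iter_eq_factorial]
    · simp only [Pi.natCast_apply, nsmul_eq_mul, factorial_succ, hc₁,
        choose_symm_add (a := m) (b := 2), hc₂]
      have h := congrArg (Nat.cast : ℕ → R) hc₃
      push_cast at h ⊢
      linear_combination (m ! : R) * h
    · rw [fwdDiff_iter_const_smul, fwdDiff_iter_pow_eq_zero_of_lt (by simpa using hi)]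
      simp

theorem HasSum.sum_antidiagonal {α : Type*} [AddCommMonoid α] [TopologicalSpace α]
    [ContinuousAdd α] [RegularSpace α] {f : ℕ × ℕ → α} {a : α} (hf : HasSum f a) :
    HasSum (fun n ↦ ∑ ij ∈ antidiagonal n, f ij) a :=
  ((HasAntidiagonal.sigmaAntidiagonalEquivProd.hasSum_iff).mpr hf).sigma fun n ↦
    (antidiagonal n).hasSum f

theorem summable_succ_pow_mul_geometric (p : ℕ) {r : ℝ} (hr₀ : 0 ≤ r) (hr₁ : r < 1) :
    Summable fun k : ℕ ↦ ((k : ℝ) + 1) ^ p * r ^ k := by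
  have hr : ‖r‖ < 1 := by rwa [Real.norm_of_nonneg hr₀]
  have hsum := ((summable_pow_mul_geometric_of_norm_lt_one p hr).add
    (summable_geometric_of_lt_one hr₀ hr₁)).mul_left (2 ^ (p - 1))
  refine hsum.of_nonneg_of_le (fun k ↦ by positivity) fun k ↦ ?_
  calc ((k : ℝ) + 1) ^ p * r ^ k ≤ 2 ^ (p - 1) * ((k : ℝ) ^ p + 1 ^ p) * r ^ k := by
        gcongr; exact add_pow_le k.cast_nonneg zero_le_one p
    _ = 2 ^ (p - 1) * ((k : ℝ) ^ p * r ^ k + r ^ k) := by ring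

theorem succ_mul_pow_div_factorial_mul_exp_le (k : ℕ) {x : ℝ} (hx : 0 ≤ x) (y : ℝ) :
    ((k + 1) * x) ^ k / (k + 1)! * Real.exp ((k + 1) * y) ≤
      Real.exp (1 + y) * (Real.exp (1 + y) * x) ^ k := by
  have hk : (1 : ℝ) ≤ k + 1 := by linarith [(k.cast_nonneg : (0 : ℝ) ≤ k)]
  have hfac : ((k : ℝ) + 1) ^ (k + 1) / (k + 1)! ≤ Real.exp (k + 1) := by
    exact_mod_cast Real.pow_div_factorial_le_exp _ (by positivity : (0 : ℝ) ≤ k + 1) (k + 1)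
  have hexp :
      Real.exp (k + 1) * Real.exp ((k + 1) * y) = Real.exp (1 + y) * Real.exp (1 + y) ^ k := by
    rw [← Real.exp_nat_mul, ← Real.exp_add, ← Real.exp_add]
    ring_nf
  calc ((k + 1) * x) ^ k / (k + 1)! * Real.exp ((k + 1) * y)
      = ((k : ℝ) + 1) ^ (k + 1) / (k + 1)! * x ^ k / (k + 1) * Real.exp ((k + 1) * y) := by
        rw [mul_pow]
        field_simp
        ring
    _ ≤ ((k : ℝ) + 1) ^ (k + 1) / (k + 1)! * x ^ k * Real.exp ((k + 1) * y) := by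
        gcongr
        exact div_le_self (by positivity) hk
    _ ≤ Real.exp (k + 1) * x ^ k * Real.exp ((k + 1) * y) := by gcongr
    _ = Real.exp (1 + y) * (Real.exp (1 + y) * x) ^ k := by
        rw [mul_pow]
        linear_combination x ^ k * hexp

theorem exp_one_sub_mul_lt_one {x : ℝ} (hx : x < 1) : Real.exp (1 - x) * x < 1 := by
  have h := Real.add_one_lt_exp (sub_ne_zero.mpr hx.ne)
  calc Real.exp (1 - x) * x < Real.exp (1 - x) * Real.exp (x - 1) := by gcongr; linarith
    _ = 1 := by rw [← Real.exp_add]; simp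

theorem eqOn_Ioo_of_analyticAt_ofReal {f g : ℂ → ℂ} {a b x₀ : ℝ}
    (hf : ∀ x ∈ Set.Ioo a b, AnalyticAt ℂ f x) (hg : ∀ x ∈ Set.Ioo a b, AnalyticAt ℂ g x)
    (hx₀ : x₀ ∈ Set.Ioo a b) (hfg : f =ᶠ[𝓝 (x₀ : ℂ)] g) :
    Set.EqOn (fun x : ℝ ↦ f x) (fun x : ℝ ↦ g x) (Set.Ioo a b) := by
  have hreal {h : ℂ → ℂ} (hh : ∀ x ∈ Set.Ioo a b, AnalyticAt ℂ h x) :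
      AnalyticOnNhd ℝ (fun x : ℝ ↦ h x) (Set.Ioo a b) := fun x hx ↦
    (hh x hx).restrictScalars.comp (Complex.ofRealCLM.analyticAt x)
  exact (hreal hf).eqOn_of_preconnected_of_eventuallyEq (hreal hg) isPreconnected_Ioo hx₀
    (Complex.continuous_ofReal.continuousAt.eventually hfg)

theorem one_sub_ofReal_ne_zero {x : ℝ} (hx : x < 1) : 1 - (x : ℂ) ≠ 0 := by
  exact_mod_cast (sub_pos.mpr hx).ne'

theorem neg_one_le_re_of_exp_mul_norm_lt_one {z : ℂ} (hz : Real.exp (1 - z.re) * ‖z‖ < 1) :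
    -1 ≤ z.re := by
  by_contra! h
  have hnorm : 1 < ‖z‖ := by linarith [Complex.abs_re_le_norm z, neg_le_abs z.re]
  have hexp : 1 ≤ Real.exp (1 - z.re) := Real.one_le_exp (by linarith)
  nlinarith

-- The Borel weight `B_z(k)` of the header; only `k ≥ 1` is meaningful.
def borelWeight (z : ℂ) (k : ℕ) : ℂ := (k * z) ^ (k - 1) * Complex.exp (-(k * z)) / k !

def borelMoment (p : ℕ) (z : ℂ) : ℂ :=
  ∑' k : ℕ, ((k + 1 : ℕ) : ℂ) ^ p * borelWeight z (k + 1)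

theorem norm_borelWeight_succ_le (z : ℂ) (k : ℕ) :
    ‖borelWeight z (k + 1)‖ ≤ Real.exp (1 - z.re) * (Real.exp (1 - z.re) * ‖z‖) ^ k := by
  have h := succ_mul_pow_div_factorial_mul_exp_le k (norm_nonneg z) (-z.re)
  rw [← sub_eq_add_neg] at h
  convert h using 1
  rw [borelWeight, Nat.add_sub_cancel, norm_div, norm_mul, norm_pow, norm_mul,
    Complex.norm_natCast, Complex.norm_natCast, Complex.norm_exp]
  simp only [Complex.neg_re, Complex.mul_re, Complex.natCast_re, Complex.natCast_im, zero_mul,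
    sub_zero]
  push_cast
  ring_nf

theorem norm_pow_mul_borelWeight_succ_le (p k : ℕ) (z : ℂ) :
    ‖((k + 1 : ℕ) : ℂ) ^ p * borelWeight z (k + 1)‖ ≤
      ((k : ℝ) + 1) ^ p * Real.exp (1 - z.re) * (Real.exp (1 - z.re) * ‖z‖) ^ k := by
  rw [norm_mul, norm_pow, Complex.norm_natCast, mul_assoc]
  push_cast
  gcongr
  exact norm_borelWeight_succ_le z k

theorem summable_borelMoment (p : ℕ) {z : ℂ} (hz : Real.exp (1 - z.re) * ‖z‖ < 1) :
    Summable fun k : ℕ ↦ ((k + 1 : ℕ) : ℂ) ^ p * borelWeight z (k + 1) :=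
  .of_norm_bounded ((summable_succ_pow_mul_geometric p (by positivity) hz).mul_right
    (Real.exp (1 - z.re))) fun k ↦ (norm_pow_mul_borelWeight_succ_le p k z).trans_eq (by ring)

theorem analyticAt_borelMoment (p : ℕ) {z : ℂ} (hz : Real.exp (1 - z.re) * ‖z‖ < 1) :
    AnalyticAt ℂ (borelMoment p) z := by
  set c := (Real.exp (1 - z.re) * ‖z‖ + 1) / 2 with hc
  have hc₀ : 0 ≤ c := by positivity
  have hc₁ : c < 1 := by linarith
  set V := {w : ℂ | Real.exp (1 - w.re) * ‖w‖ < c}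
  have hV : IsOpen V := isOpen_lt (by fun_prop) continuous_const
  have hdiff : DifferentiableOn ℂ (borelMoment p) V := by
    refine Complex.differentiableOn_tsum_of_summable_norm
      ((summable_succ_pow_mul_geometric p hc₀ hc₁).mul_right (Real.exp 2))
      (fun k ↦ by unfold borelWeight; fun_prop) hV fun k w hw ↦ ?_
    have hre := neg_one_le_re_of_exp_mul_norm_lt_one (hw.trans hc₁)
    calc ‖((k + 1 : ℕ) : ℂ) ^ p * borelWeight w (k + 1)‖
        ≤ ((k : ℝ) + 1) ^ p * Real.exp (1 - w.re) * (Real.exp (1 - w.re) * ‖w‖) ^ k :=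
          norm_pow_mul_borelWeight_succ_le p k w
      _ ≤ ((k : ℝ) + 1) ^ p * Real.exp 2 * c ^ k := by
          gcongr
          · linarith
          · exact hw.le
      _ = _ := by ring
  exact hdiff.analyticAt (hV.mem_nhds (by show _ < c; linarith))

def borelDoubleTerm (p : ℕ) (z : ℂ) (ij : ℕ × ℕ) : ℂ :=
  ((ij.1 + 1 : ℕ) : ℂ) ^ p * ((((ij.1 + 1 : ℕ) : ℂ) * z) ^ ij.1 / (ij.1 + 1)!) *
    ((-(((ij.1 + 1 : ℕ) : ℂ) * z)) ^ ij.2 / ij.2 !)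

theorem borelDoubleTerm_eq (p i j : ℕ) (z : ℂ) :
    borelDoubleTerm p z (i, j) =
      (-1) ^ j * (i + 1 : ℂ) ^ (i + j + p) / ((i + 1)! * j !) * z ^ (i + j) := by
  rw [borelDoubleTerm, neg_pow, mul_pow, mul_pow]
  push_cast
  ring

theorem hasSum_borelDoubleTerm_right (p i : ℕ) (z : ℂ) :
    HasSum (fun j ↦ borelDoubleTerm p z (i, j))
      (((i + 1 : ℕ) : ℂ) ^ p * borelWeight z (i + 1)) := by
  have h := (NormedSpace.expSeries_div_hasSum_exp (-(((i + 1 : ℕ) : ℂ) * z))).mul_left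
    (((i + 1 : ℕ) : ℂ) ^ p * ((((i + 1 : ℕ) : ℂ) * z) ^ i / (i + 1)!))
  rw [← Complex.exp_eq_exp_ℂ] at h
  rw [borelWeight, Nat.add_sub_cancel, mul_div_right_comm, ← mul_assoc]
  exact h

theorem summable_norm_borelDoubleTerm (p : ℕ) {z : ℂ} (hz : Real.exp (1 + ‖z‖) * ‖z‖ < 1) :
    Summable fun ij ↦ ‖borelDoubleTerm p z ij‖ := by
  have hrow (i : ℕ) : HasSum (fun j ↦ ‖borelDoubleTerm p z (i, j)‖)
      (((i : ℝ) + 1) ^ p * (((i + 1) * ‖z‖) ^ i / (i + 1)! * Real.exp ((i + 1) * ‖z‖))) := by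
    have h := (NormedSpace.expSeries_div_hasSum_exp (((i : ℝ) + 1) * ‖z‖)).mul_left
      (((i : ℝ) + 1) ^ p * (((i + 1) * ‖z‖) ^ i / (i + 1)!))
    rw [← Real.exp_eq_exp_ℝ] at h
    rw [← mul_assoc]
    refine h.congr_fun fun j ↦ ?_
    simp only [borelDoubleTerm, norm_mul, norm_div, norm_pow, norm_neg, Complex.norm_natCast]
    push_cast
    rfl
  refine (summable_prod_of_nonneg fun _ ↦ norm_nonneg _).mpr
    ⟨fun i ↦ (hrow i).summable, ?_⟩
  simp only [(hrow _).tsum_eq]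
  refine ((summable_succ_pow_mul_geometric p (by positivity) hz).mul_right
    (Real.exp (1 + ‖z‖))).of_nonneg_of_le (fun i ↦ by positivity) fun i ↦ ?_
  calc ((i : ℝ) + 1) ^ p * (((i + 1) * ‖z‖) ^ i / (i + 1)! * Real.exp ((i + 1) * ‖z‖))
      ≤ ((i : ℝ) + 1) ^ p * (Real.exp (1 + ‖z‖) * (Real.exp (1 + ‖z‖) * ‖z‖) ^ i) := by
        gcongr ((i : ℝ) + 1) ^ p * ?_
        exact succ_mul_pow_div_factorial_mul_exp_le i (norm_nonneg z) ‖z‖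
    _ = _ := by ring

-- The `k = 0` term of the forward difference is `0 ^ (n + p)`, which is the junk value `1` when
-- `n = p = 0` and has no counterpart in the series; the second summand cancels it.
def borelCoeff (p n : ℕ) : ℂ :=
  ((Δ_[1])^[n + 1] (fun r : ℂ ↦ r ^ (n + p)) 0 + (-1) ^ n * 0 ^ (n + p)) / (n + 1)!

theorem sum_antidiagonal_borelDoubleTerm (p n : ℕ) (z : ℂ) :
    ∑ ij ∈ antidiagonal n, borelDoubleTerm p z ij = borelCoeff p n * z ^ n := by
  rw [borelCoeff, fwdDiff_iter_eq_sum_shift, sum_range_succ',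
    Nat.sum_antidiagonal_eq_sum_range_succ_mk, add_assoc]
  have hcancel : ((-1 : ℤ) ^ (n + 1 - 0) * ((n + 1).choose 0 : ℤ)) •
      ((0 : ℂ) + (0 • 1 : ℂ)) ^ (n + p) + (-1) ^ n * 0 ^ (n + p) = 0 := by
    simp [pow_succ]
  rw [hcancel, add_zero, sum_div, sum_mul]
  refine sum_congr rfl fun i hi ↦ ?_
  obtain ⟨j, rfl⟩ := Nat.exists_eq_add_of_le (Nat.lt_succ_iff.mp (mem_range.mp hi))
  rw [add_tsub_cancel_left, borelDoubleTerm_eq, Nat.add_sub_add_right, add_tsub_cancel_left,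
    zsmul_eq_mul]
  push_cast
  rw [Nat.cast_choose ℂ (by omega : i + 1 ≤ i + j + 1), Nat.add_sub_add_right,
    add_tsub_cancel_left]
  have : ((i + j + 1)! : ℂ) ≠ 0 := by exact_mod_cast (i + j + 1).factorial_ne_zero
  simp only [zero_add, nsmul_eq_mul, mul_one]
  push_cast
  field_simp

theorem hasSum_borelMoment_of_small (p : ℕ) {z : ℂ} (hz : Real.exp (1 + ‖z‖) * ‖z‖ < 1) :
    HasSum (fun n ↦ borelCoeff p n * z ^ n) (borelMoment p z) := by
  have hsum := (summable_norm_borelDoubleTerm p hz).of_norm.hasSum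
  have hrows := hsum.prod_fiberwise fun i ↦ hasSum_borelDoubleTerm_right p i z
  rw [borelMoment, hrows.tsum_eq]
  simpa only [sum_antidiagonal_borelDoubleTerm] using hsum.sum_antidiagonal

theorem eventually_hasSum_borelMoment (p : ℕ) :
    ∀ᶠ z in 𝓝 (0 : ℂ), HasSum (fun n ↦ borelCoeff p n * z ^ n) (borelMoment p z) := by
  have hopen : IsOpen {z : ℂ | Real.exp (1 + ‖z‖) * ‖z‖ < 1} :=
    isOpen_lt (by fun_prop) continuous_const
  filter_upwards [hopen.mem_nhds (by simp)] with z hz using hasSum_borelMoment_of_small p hz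

theorem borelCoeff_zero (n : ℕ) : borelCoeff 0 n = if n = 0 then 1 else 0 := by
  rw [borelCoeff, add_zero, fwdDiff_iter_pow_eq_zero_of_lt n.lt_succ_self]
  cases n <;> simp

theorem borelCoeff_one (n : ℕ) : borelCoeff 1 n = 1 := by
  rw [borelCoeff, fwdDiff_iter_eq_factorial]
  simp [factorial_ne_zero]

theorem borelCoeff_two (n : ℕ) : borelCoeff 2 n = (n + 2).choose 2 := by
  rw [borelCoeff, show n + 2 = n + 1 + 1 by rfl, fwdDiff_iter_pow_succ]
  simp [factorial_ne_zero]

theorem borelMoment_zero_eventuallyEq : borelMoment 0 =ᶠ[𝓝 0] fun _ ↦ 1 := by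
  filter_upwards [eventually_hasSum_borelMoment 0] with z hz
  rw [hz.unique (hasSum_single 0 fun n hn ↦ by simp [borelCoeff_zero, hn]), borelCoeff_zero]
  simp

theorem borelMoment_one_eventuallyEq : borelMoment 1 =ᶠ[𝓝 0] fun z ↦ (1 - z)⁻¹ := by
  filter_upwards [eventually_hasSum_borelMoment 1, Metric.ball_mem_nhds 0 one_pos]
    with z hz hz₁
  refine hz.unique ?_
  simpa [borelCoeff_one] using hasSum_geometric_of_norm_lt_one (mem_ball_zero_iff.mp hz₁)

theorem borelMoment_two_eventuallyEq : borelMoment 2 =ᶠ[𝓝 0] fun z ↦ 1 / (1 - z) ^ 3 := by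
  filter_upwards [eventually_hasSum_borelMoment 2, Metric.ball_mem_nhds 0 one_pos]
    with z hz hz₁
  refine hz.unique ?_
  simpa [borelCoeff_two] using
    hasSum_choose_mul_geometric_of_norm_lt_one 2 (mem_ball_zero_iff.mp hz₁)

theorem hasSum_borelMoment_ofReal {p : ℕ} {F : ℂ → ℂ}
    (hF : ∀ x : ℝ, x < 1 → AnalyticAt ℂ F x) (hF₀ : borelMoment p =ᶠ[𝓝 0] F)
    {μ : ℝ} (hμ₀ : 0 ≤ μ) (hμ₁ : μ < 1) :
    HasSum (fun k ↦ ((k + 1 : ℕ) : ℂ) ^ p * borelWeight μ (k + 1)) (F μ) := by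
  have hsmall : IsOpen {z : ℂ | Real.exp (1 + ‖z‖) * ‖z‖ < 1} :=
    isOpen_lt (by fun_prop) continuous_const
  obtain ⟨δ, hδ, hball⟩ := Metric.isOpen_iff.mp hsmall 0 (by simp)
  have hconv : ∀ x ∈ Set.Ioo (-δ) 1, Real.exp (1 - (x : ℂ).re) * ‖(x : ℂ)‖ < 1 := by
    rintro x ⟨hxδ, hx₁⟩
    rcases le_or_gt 0 x with hx₀ | hx₀
    · simpa [abs_of_nonneg hx₀] using exp_one_sub_mul_lt_one hx₁
    · have hx : Real.exp (1 + ‖(x : ℂ)‖) * ‖(x : ℂ)‖ < 1 :=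
        hball (by simpa [abs_of_neg hx₀] using neg_lt.mp hxδ)
      simpa [abs_of_neg hx₀, sub_eq_add_neg] using hx
  have heq := eqOn_Ioo_of_analyticAt_ofReal (fun x hx ↦ analyticAt_borelMoment p (hconv x hx))
    (fun x hx ↦ hF x hx.2) ⟨neg_lt_zero.mpr hδ, one_pos⟩ (by simpa using hF₀)
    ⟨by linarith, hμ₁⟩
  rw [← show borelMoment p μ = F μ from heq]
  exact (summable_borelMoment p (hconv μ ⟨by linarith, hμ₁⟩)).hasSum

theorem hasSum_borelWeight {μ : ℝ} (hμ₀ : 0 ≤ μ) (hμ₁ : μ < 1) :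
    HasSum (fun k ↦ borelWeight μ (k + 1)) 1 := by
  simpa using hasSum_borelMoment_ofReal (fun _ _ ↦ analyticAt_const)
    borelMoment_zero_eventuallyEq hμ₀ hμ₁

theorem hasSum_mul_borelWeight {μ : ℝ} (hμ₀ : 0 ≤ μ) (hμ₁ : μ < 1) :
    HasSum (fun k ↦ ((k + 1 : ℕ) : ℂ) * borelWeight μ (k + 1)) ((1 - μ)⁻¹ : ℝ) := by
  have h := hasSum_borelMoment_ofReal (F := fun z ↦ (1 - z)⁻¹)
    (fun _ hx ↦ (analyticAt_const.sub analyticAt_id).inv (one_sub_ofReal_ne_zero hx))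
    borelMoment_one_eventuallyEq hμ₀ hμ₁
  rw [Complex.ofReal_inv, Complex.ofReal_sub, Complex.ofReal_one]
  exact h.congr_fun fun k ↦ by rw [pow_one]

theorem hasSum_sq_mul_borelWeight {μ : ℝ} (hμ₀ : 0 ≤ μ) (hμ₁ : μ < 1) :
    HasSum (fun k ↦ ((k + 1 : ℕ) : ℂ) ^ 2 * borelWeight μ (k + 1)) (1 / (1 - μ) ^ 3 : ℝ) := by
  have h := hasSum_borelMoment_ofReal (F := fun z ↦ 1 / (1 - z) ^ 3)
    (fun _ hx ↦ analyticAt_const.div ((analyticAt_const.sub analyticAt_id).pow 3)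
      (pow_ne_zero 3 (one_sub_ofReal_ne_zero hx)))
    borelMoment_two_eventuallyEq hμ₀ hμ₁
  rw [Complex.ofReal_div, Complex.ofReal_pow, Complex.ofReal_sub, Complex.ofReal_one]
  exact h

namespace Parking

theorem ofReal_q_succ (k : ℕ) (t : ℝ) :
    (q (k + 1) t : ℂ) = Real.exp (-t) * borelWeight (1 - Real.exp (-t) : ℝ) (k + 1) := by
  rw [q, borelWeight]
  push_cast
  ring

theorem hasSum_pow_mul_q {p : ℕ} {t v : ℝ}
    (h : HasSum (fun k ↦ ((k + 1 : ℕ) : ℂ) ^ p * borelWeight (1 - Real.exp (-t) : ℝ) (k + 1))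
      v) :
    HasSum (fun k ↦ ((k + 1 : ℕ) : ℝ) ^ p * q (k + 1) t) (Real.exp (-t) * v) := by
  rw [← Complex.hasSum_ofReal, Complex.ofReal_mul]
  refine (h.mul_left (Real.exp (-t) : ℂ)).congr_fun fun k ↦ ?_
  rw [Complex.ofReal_mul, ofReal_q_succ]
  push_cast
  ring

/-- moments of the solution of the additive Smoluchowski equation:
`Σ k q(k,t) = 1`, `Σ q(k,t) = e^{-t}`, `Σ k² q(k,t) = e^{2t}`. -/
theorem q_moments (t : ℝ) (ht : 0 ≤ t) :
    (Summable fun k : ℕ => (((k + 1 : ℕ) : ℝ)) * q (k + 1) t) ∧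
    (∑' k : ℕ, (((k + 1 : ℕ) : ℝ)) * q (k + 1) t) = 1 ∧
    (Summable fun k : ℕ => q (k + 1) t) ∧
    (∑' k : ℕ, q (k + 1) t) = Real.exp (-t) ∧
    (Summable fun k : ℕ => (((k + 1 : ℕ) : ℝ)) ^ 2 * q (k + 1) t) ∧
    (∑' k : ℕ, (((k + 1 : ℕ) : ℝ)) ^ 2 * q (k + 1) t) = Real.exp (2 * t) := by
  have hμ₀ : 0 ≤ 1 - Real.exp (-t) :=
    sub_nonneg.mpr (Real.exp_le_one_iff.mpr (neg_nonpos.mpr ht))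
  have hμ₁ : 1 - Real.exp (-t) < 1 := sub_lt_self 1 (Real.exp_pos _)
  have h₀ := hasSum_pow_mul_q (p := 0) (v := 1)
    ((hasSum_borelWeight hμ₀ hμ₁).congr_fun fun k ↦ by rw [pow_zero, one_mul])
  have h₁ := hasSum_pow_mul_q (p := 1)
    ((hasSum_mul_borelWeight hμ₀ hμ₁).congr_fun fun k ↦ by rw [pow_one])
  have h₂ := hasSum_pow_mul_q (hasSum_sq_mul_borelWeight hμ₀ hμ₁)
  simp only [pow_zero, one_mul, pow_one, mul_one, sub_sub_cancel] at h₀ h₁ h₂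
  have hexp : Real.exp (-t) * (1 / Real.exp (-t) ^ 3) = Real.exp (2 * t) := by
    rw [Real.exp_neg, show 2 * t = ((2 : ℕ) : ℝ) * t by norm_num, Real.exp_nat_mul]
    field_simp
  rw [mul_inv_cancel₀ (Real.exp_pos _).ne'] at h₁
  rw [hexp] at h₂
  exact ⟨h₁.summable, h₁.tsum_eq, h₀.summable, h₀.tsum_eq, h₂.summable, h₂.tsum_eq⟩

end Parking
end
end

section
/- For every integer p ≥ 2 there exists a constant A_p > 0 such that for all t ≥ 0, Σ_{k=1}^{∞} k^p · q(k,t) ≤ A_p · e^{2(p−1)t}, the series being convergent. -/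
/-
With `s = e^{-t}` one has `q k t = s · B_{1-s}(k)`, where `B_a(k) = (ka)^{k-1} e^{-ka} / k!` are the
weights of the Borel distribution. Stirling's bound `k! ≥ √k (k/e)^k` gives
`k^{3/2} B_{1-s}(k) ≤ e^s ((1-s) e^s)^{k-1} ≤ e^s e^{-(k-1) s²/2}`, so up to a constant
`k^p q(k,t) ≤ s √k k^{p-2} e^{-k s²/2} ≤ (s² k^{p-1} + k^{p-2}) e^{-k s²/2}`.
Since `∑_k k^j e^{-k u} = O(u^{-(j+1)})`, both pieces sum to `O(s^{-(2p-2)}) = O(e^{2(p-1)t})`.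
-/

open scoped BigOperators
open Classical Filter Topology

noncomputable section

namespace Parking

open Real

def borelWeight (a : ℝ) (n : ℕ) : ℝ :=
  (n * a) ^ (n - 1) * exp (-(n * a)) / n.factorial

lemma q_eq_exp_neg_mul_borelWeight (n : ℕ) (t : ℝ) :
    q n t = exp (-t) * borelWeight (1 - exp (-t)) n := by
  unfold q borelWeight
  ring

lemma borelWeight_nonneg {a : ℝ} (ha : 0 ≤ a) (n : ℕ) : 0 ≤ borelWeight a n := by
  unfold borelWeight
  positivity

lemma sqrt_mul_pow_div_exp_le_factorial (n : ℕ) :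
    √n * (n / exp 1) ^ n ≤ n.factorial :=
  le_trans (by gcongr; nlinarith [pi_gt_three]) (Stirling.le_factorial_stirling n)

lemma sqrt_mul_self_mul_borelWeight_le {a : ℝ} (ha : 0 ≤ a) {n : ℕ} (hn : n ≠ 0) :
    √n * n * borelWeight a n ≤ exp (1 - a) * (a * exp (1 - a)) ^ (n - 1) := by
  obtain ⟨k, rfl⟩ := Nat.exists_eq_succ_of_ne_zero hn
  set N : ℝ := ((k + 1 : ℕ) : ℝ)
  have hN : 0 < N := by positivity
  have hfac := sqrt_mul_pow_div_exp_le_factorial (k + 1)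
  have hstir : 0 < √N * (N / exp 1) ^ (k + 1) := by positivity
  rw [borelWeight, Nat.succ_sub_one, mul_div_assoc']
  calc √N * N * ((N * a) ^ k * exp (-(N * a))) / (k + 1).factorial
      ≤ √N * N * ((N * a) ^ k * exp (-(N * a))) / (√N * (N / exp 1) ^ (k + 1)) := by
        gcongr
    _ = exp (1 - a) * (a * exp (1 - a)) ^ k := by
        have hexp : exp 1 ^ (k + 1) * exp (-(N * a)) = exp (1 - a) * exp (1 - a) ^ k := by
          rw [← exp_nat_mul, ← exp_nat_mul, ← exp_add, ← exp_add]
          congr 1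
          push_cast [N]
          ring
        rw [mul_pow, div_pow]
        field_simp
        linear_combination N ^ (k + 1) * a ^ k * hexp

lemma one_sub_mul_exp_le_exp_neg_sq_div_two {s : ℝ} (hs : 0 ≤ s) :
    (1 - s) * exp s ≤ exp (-(s ^ 2 / 2)) := by
  rcases le_or_gt s 1 with hs1 | hs1
  · have hexp : exp s ≤ 1 + s + s ^ 2 / 2 + 2 / 9 * s ^ 3 := by
      have h := exp_bound' hs hs1 (n := 3) (by norm_num)
      norm_num [Finset.sum_range_succ, Nat.factorial] at h
      linarith
    have h := add_one_le_exp (-(s ^ 2 / 2))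
    nlinarith [mul_le_mul_of_nonneg_left hexp (sub_nonneg.2 hs1)]
  · exact (mul_nonpos_of_nonpos_of_nonneg (by linarith) (exp_nonneg s)).trans (exp_nonneg _)

lemma tsum_pow_mul_exp_neg_mul_le (j : ℕ) {u : ℝ} (hu : 0 < u) (hu1 : u ≤ 1) :
    ∑' n : ℕ, (n : ℝ) ^ j * exp (-u * n) ≤ 3 * 2 ^ j * j.factorial / u ^ (j + 1) := by
  set r := exp (-(u / 2))
  have hr1 : r < 1 := exp_lt_one_iff.2 (by linarith)
  have hpt : ∀ n : ℕ, (n : ℝ) ^ j * exp (-u * n) ≤ j.factorial * (2 / u) ^ j * r ^ n := by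
    intro n
    have h := pow_div_factorial_le_exp (x := u / 2 * n) (by positivity) j
    rw [div_le_iff₀ (by positivity)] at h
    have hsplit : exp (-u * n) = exp (-(u / 2 * n)) * r ^ n := by
      rw [← exp_nat_mul, ← exp_add]
      ring_nf
    calc (n : ℝ) ^ j * exp (-u * n) = (2 / u) ^ j * (u / 2 * n) ^ j * exp (-(u / 2 * n)) * r ^ n := by
          rw [hsplit, ← mul_pow, ← mul_assoc (2 / u), div_mul_div_cancel₀' two_ne_zero, div_self hu.ne',
            one_mul, mul_assoc]
      _ ≤ (2 / u) ^ j * (exp (u / 2 * n) * j.factorial) * exp (-(u / 2 * n)) * r ^ n := by gcongr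
      _ = j.factorial * (2 / u) ^ j * r ^ n := by
          have hinv : exp (u / 2 * n) * exp (-(u / 2 * n)) = 1 := by rw [← exp_add]; simp
          linear_combination ((2 / u) ^ j * j.factorial * r ^ n) * hinv
  have hgeom : (1 - r)⁻¹ ≤ 3 / u := by
    have h : r * (1 + u / 2) ≤ 1 := by
      calc r * (1 + u / 2) ≤ r * exp (u / 2) := by gcongr; linarith [add_one_le_exp (u / 2)]
        _ = 1 := by rw [← exp_add]; simp
    rw [inv_le_comm₀ (by linarith) (by positivity), inv_div]
    nlinarith [exp_pos (-(u / 2))]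
  calc ∑' n : ℕ, (n : ℝ) ^ j * exp (-u * n)
      ≤ ∑' n : ℕ, j.factorial * (2 / u) ^ j * r ^ n :=
        (summable_pow_mul_exp_neg_nat_mul j hu).tsum_le_tsum hpt
          ((summable_geometric_of_lt_one (exp_nonneg _) hr1).mul_left _)
    _ = j.factorial * (2 / u) ^ j * (1 - r)⁻¹ := by
        rw [tsum_mul_left, tsum_geometric_of_lt_one (exp_nonneg _) hr1]
    _ ≤ j.factorial * (2 / u) ^ j * (3 / u) := by gcongr
    _ = 3 * 2 ^ j * j.factorial / u ^ (j + 1) := by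
        rw [div_pow]
        field_simp
        ring

lemma pow_mul_borelWeight_le (m : ℕ) {s : ℝ} (hs0 : 0 ≤ s) (hs1 : s ≤ 1) {n : ℕ} (hn : n ≠ 0) :
    (n : ℝ) ^ (m + 2) * (s * borelWeight (1 - s) n) ≤
      exp 2 * (s ^ 2 * (n ^ (m + 1) * exp (-(s ^ 2 / 2) * n)) + n ^ m * exp (-(s ^ 2 / 2) * n)) := by
  set u := s ^ 2 / 2
  have hB := sqrt_mul_self_mul_borelWeight_le (sub_nonneg.2 hs1) hn
  rw [sub_sub_cancel] at hB
  have hdecay : ((1 - s) * exp s) ^ (n - 1) ≤ exp u * exp (-u * n) := by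
    calc ((1 - s) * exp s) ^ (n - 1) ≤ exp (-u) ^ (n - 1) :=
          pow_le_pow_left₀ (mul_nonneg (sub_nonneg.2 hs1) (exp_nonneg s))
            (one_sub_mul_exp_le_exp_neg_sq_div_two hs0) _
      _ = exp u * exp (-u * n) := by
          rw [← exp_nat_mul, ← exp_add, Nat.cast_sub (Nat.one_le_iff_ne_zero.2 hn)]
          ring_nf
  have hsqrt : √(n : ℝ) * √n = n := mul_self_sqrt (Nat.cast_nonneg n)
  -- AM-GM, trading the `√n` left over by Stirling's formula for one factor of `s`
  have hAM : s * √n ≤ (s ^ 2 * n + 1) / 2 := by nlinarith [sq_nonneg (s * √n - 1)]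
  have hexp : exp s * exp u / 2 ≤ exp 2 := by
    rw [← exp_add]
    have : exp (s + u) ≤ exp 2 := exp_le_exp.2 (by simp only [u]; nlinarith)
    linarith [exp_pos (s + u)]
  calc (n : ℝ) ^ (m + 2) * (s * borelWeight (1 - s) n)
      = n ^ m * (s * √n) * (√n * n * borelWeight (1 - s) n) := by
        linear_combination (-((n : ℝ) ^ m * s * n * borelWeight (1 - s) n)) * hsqrt
    _ ≤ n ^ m * ((s ^ 2 * n + 1) / 2) * (exp s * (exp u * exp (-u * n))) :=
        mul_le_mul (by gcongr) (hB.trans (by gcongr))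
          (mul_nonneg (by positivity) (borelWeight_nonneg (sub_nonneg.2 hs1) n)) (by positivity)
    _ = exp s * exp u / 2 * (s ^ 2 * (n ^ (m + 1) * exp (-u * n)) + n ^ m * exp (-u * n)) := by ring
    _ ≤ exp 2 * (s ^ 2 * (n ^ (m + 1) * exp (-u * n)) + n ^ m * exp (-u * n)) := by gcongr

lemma exists_borelWeight_moment_le (m : ℕ) :
    ∃ A : ℝ, 0 < A ∧ ∀ s : ℝ, 0 < s → s ≤ 1 →
      Summable (fun k : ℕ => ((k + 1 : ℕ) : ℝ) ^ (m + 2) * (s * borelWeight (1 - s) (k + 1))) ∧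
      ∑' k : ℕ, ((k + 1 : ℕ) : ℝ) ^ (m + 2) * (s * borelWeight (1 - s) (k + 1)) ≤
        A / s ^ (2 * m + 2) := by
  refine ⟨exp 2 * (2 ^ (m + 2) * (3 * 2 ^ (m + 1) * (m + 1).factorial) +
    2 ^ (m + 1) * (3 * 2 ^ m * m.factorial)), by positivity, fun s hs0 hs1 => ?_⟩
  set u := s ^ 2 / 2
  have hu0 : 0 < u := by positivity
  have hu1 : u ≤ 1 := by simp only [u]; nlinarith
  set h : ℕ → ℕ → ℝ := fun j n => (n : ℝ) ^ j * exp (-u * n)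
  have h_summable (j : ℕ) : Summable (fun k => h j (k + 1)) :=
    (summable_pow_mul_exp_neg_nat_mul j hu0).comp_injective (add_left_injective 1)
  have h_tsum_le (j : ℕ) : ∑' k, h j (k + 1) ≤ 3 * 2 ^ j * j.factorial / u ^ (j + 1) :=
    (tsum_comp_le_tsum_of_inj (summable_pow_mul_exp_neg_nat_mul j hu0)
      (fun n => by positivity) (add_left_injective 1)).trans (tsum_pow_mul_exp_neg_mul_le j hu0 hu1)
  have h_nonneg (k : ℕ) : 0 ≤ ((k + 1 : ℕ) : ℝ) ^ (m + 2) * (s * borelWeight (1 - s) (k + 1)) :=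
    mul_nonneg (by positivity) (mul_nonneg hs0.le (borelWeight_nonneg (by linarith) _))
  have h_term (k : ℕ) := pow_mul_borelWeight_le m hs0.le hs1 k.succ_ne_zero
  have h_dom_summable : Summable (fun k => exp 2 * (s ^ 2 * h (m + 1) (k + 1) + h m (k + 1))) :=
    (((h_summable (m + 1)).mul_left _).add (h_summable m)).mul_left _
  have h_summable_moment := Summable.of_nonneg_of_le h_nonneg h_term h_dom_summable
  refine ⟨h_summable_moment, ?_⟩
  calc ∑' k : ℕ, ((k + 1 : ℕ) : ℝ) ^ (m + 2) * (s * borelWeight (1 - s) (k + 1))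
      ≤ ∑' k, exp 2 * (s ^ 2 * h (m + 1) (k + 1) + h m (k + 1)) :=
        h_summable_moment.tsum_le_tsum h_term h_dom_summable
    _ = exp 2 * (s ^ 2 * ∑' k, h (m + 1) (k + 1) + ∑' k, h m (k + 1)) := by
        rw [tsum_mul_left, ((h_summable (m + 1)).mul_left _).tsum_add (h_summable m), tsum_mul_left]
    _ ≤ exp 2 * (s ^ 2 * (3 * 2 ^ (m + 1) * (m + 1).factorial / u ^ (m + 2)) +
          3 * 2 ^ m * m.factorial / u ^ (m + 1)) := by
        gcongr
        exacts [h_tsum_le (m + 1), h_tsum_le m]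
    _ = _ := by
        simp only [u, div_pow, ← pow_mul]
        field_simp
        ring

/-- for every `p ≥ 2` there is `A_p > 0` with
`Σ_k k^p q(k,t) ≤ A_p e^{2(p-1)t}` for all `t ≥ 0`. -/
theorem q_moment_bound (p : ℕ) (hp : 2 ≤ p) :
    ∃ A : ℝ, 0 < A ∧ ∀ t : ℝ, 0 ≤ t →
      Summable (fun k : ℕ => (((k + 1 : ℕ) : ℝ)) ^ p * q (k + 1) t) ∧
      (∑' k : ℕ, (((k + 1 : ℕ) : ℝ)) ^ p * q (k + 1) t)
        ≤ A * Real.exp (2 * ((p : ℝ) - 1) * t) := by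
  obtain ⟨m, rfl⟩ : ∃ m, p = m + 2 := ⟨p - 2, by omega⟩
  obtain ⟨A, hA, hmoment⟩ := exists_borelWeight_moment_le m
  refine ⟨A, hA, fun t ht => ?_⟩
  have hexp : exp (2 * (((m + 2 : ℕ) : ℝ) - 1) * t) = (exp (-t) ^ (2 * m + 2))⁻¹ := by
    rw [← exp_nat_mul, ← exp_neg]
    push_cast
    ring_nf
  simp_rw [q_eq_exp_neg_mul_borelWeight, hexp, ← div_eq_mul_inv]
  exact hmoment _ (exp_pos _) (exp_le_one_iff.2 (by linarith))

end Parking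
end
end

section
/- Fix an integer k ≥ 2 and a real α ∈ (0,1). Then lim_{n→∞} binom(⌊αn⌋, k−2) · k^{k−2} · (n−k)^{⌊αn⌋−k} · (n−⌊αn⌋−1) · n / n^{⌊αn⌋} = (1−α) · α^{k−2} · (k^{k−2}/(k−2)!) · e^{−αk}. (The left-hand side is the probability that, after the ⌊αn⌋-th arrival in a circular parking of n−1 cars on n places, the first car to have parked belongs to a block of size k.) -/
/-!
Put `m = ⌊αn⌋`. For `m ≥ k` the ratio factors as
`(binom(m, k-2) / n^(k-2)) · k^(k-2) · (1 - k/n)^(m-k) · ((n - m - 1) / n)`,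
using `n^m = n^(k-2) · n^(m-k) · n · n`. Since `m / n → α`, the first factor tends to
`α^(k-2) / (k-2)!` (the binomial coefficient is a product of `k - 2` factors `(m - i) / n`), the
third to `e^(-αk)` (take logarithms: `(m - k) log(1 - k/n) = ((m - k)/n) · n log(1 - k/n)`) and
the last to `1 - α`.
-/

open scoped BigOperators
open Classical Filter Topology

noncomputable section

section RatioLimits

variable {u : ℕ → ℕ} {a : ℝ}

theorem tendsto_natCast_sub_div (hu : Tendsto (fun n : ℕ => (u n : ℝ) / n) atTop (𝓝 a)) (j : ℕ) :
    Tendsto (fun n : ℕ => ((u n - j : ℕ) : ℝ) / n) atTop (𝓝 a) := by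
  have hlower : Tendsto (fun n : ℕ => (u n : ℝ) / n - j / n) atTop (𝓝 a) := by
    simpa using hu.sub (tendsto_const_div_atTop_nhds_zero_nat (j : ℝ))
  refine tendsto_of_tendsto_of_tendsto_of_le_of_le' hlower hu ?_ ?_
  · refine Eventually.of_forall fun n => ?_
    rw [← sub_div]
    gcongr
    have : (u n : ℝ) ≤ ((u n - j : ℕ) : ℝ) + j := by exact_mod_cast le_tsub_add
    linarith
  · exact Eventually.of_forall fun n => by gcongr; exact_mod_cast Nat.sub_le _ _

theorem tendsto_natCast_self_sub_div (hu : Tendsto (fun n : ℕ => (u n : ℝ) / n) atTop (𝓝 a))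
    (hle : ∀ᶠ n in atTop, u n ≤ n) :
    Tendsto (fun n : ℕ => ((n - u n : ℕ) : ℝ) / n) atTop (𝓝 (1 - a)) := by
  refine (tendsto_const_nhds.sub hu).congr' ?_
  filter_upwards [hle, eventually_gt_atTop 0] with n hle hn
  rw [Nat.cast_sub hle, sub_div, div_self (by positivity)]

theorem tendsto_choose_div_pow (hu : Tendsto (fun n : ℕ => (u n : ℝ) / n) atTop (𝓝 a)) (r : ℕ) :
    Tendsto (fun n : ℕ => ((u n).choose r : ℝ) / (n : ℝ) ^ r) atTop
      (𝓝 (a ^ r / r.factorial)) := by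
  have hprod : Tendsto (fun n : ℕ => ∏ i ∈ Finset.range r, ((u n - i : ℕ) : ℝ) / n) atTop
      (𝓝 (a ^ r)) := by
    simpa using tendsto_finsetProd (Finset.range r) fun i _ => tendsto_natCast_sub_div hu i
  refine (hprod.div_const (r.factorial : ℝ)).congr fun n => ?_
  rw [Finset.prod_div_distrib, Finset.prod_const, Finset.card_range, ← Nat.cast_prod,
    ← Nat.descFactorial_eq_prod_range, Nat.descFactorial_eq_factorial_mul_choose]
  push_cast
  field_simp

theorem tendsto_one_add_div_pow (hu : Tendsto (fun n : ℕ => (u n : ℝ) / n) atTop (𝓝 a)) (t : ℝ) :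
    Tendsto (fun n : ℕ => (1 + t / n) ^ u n) atTop (𝓝 (Real.exp (a * t))) := by
  have hlog : Tendsto (fun n : ℕ => (u n : ℝ) / n * (n * Real.log (1 + t / n))) atTop
      (𝓝 (a * t)) :=
    hu.mul ((Real.tendsto_mul_log_one_add_div_atTop t).comp tendsto_natCast_atTop_atTop)
  have hbase : ∀ᶠ n : ℕ in atTop, 0 < 1 + t / n := by
    have : Tendsto (fun n : ℕ => 1 + t / n) atTop (𝓝 1) := by
      simpa using (tendsto_const_div_atTop_nhds_zero_nat t).const_add 1
    exact this.eventually (lt_mem_nhds one_pos)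
  refine ((Real.continuous_exp.tendsto _).comp hlog).congr' ?_
  filter_upwards [hbase, eventually_gt_atTop 0] with n hbase hn
  have : (u n : ℝ) / n * (n * Real.log (1 + t / n)) = u n * Real.log (1 + t / n) := by
    field_simp
  rw [Function.comp_apply, this, Real.exp_nat_mul, Real.exp_log hbase]

end RatioLimits

theorem cast_tagged_cluster_div_pow_eq {n m k : ℕ} (hk : 2 ≤ k) (hkm : k ≤ m) (hkn : k ≤ n)
    (hn : n ≠ 0) :
    ((m.choose (k - 2) * k ^ (k - 2) * (n - k) ^ (m - k) * (n - m - 1) * n : ℕ) : ℝ) / (n : ℝ) ^ m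
      = (m.choose (k - 2) : ℝ) / (n : ℝ) ^ (k - 2) * (k : ℝ) ^ (k - 2)
        * (1 + -(k : ℝ) / n) ^ (m - k) * (((n - m - 1 : ℕ) : ℝ) / n) := by
  have hpow : (n : ℝ) ^ m = (n : ℝ) ^ (k - 2) * (n : ℝ) ^ (m - k) * n * n := by
    rw [← pow_add, ← pow_succ, ← pow_succ]
    congr 1
    omega
  have hbase : 1 + -(k : ℝ) / n = ((n - k : ℕ) : ℝ) / n := by
    rw [Nat.cast_sub hkn]
    field_simp
    ring
  rw [hpow, hbase, div_pow]
  push_cast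
  field_simp

namespace Parking

/-- for fixed `k ≥ 2` and `α ∈ (0,1)`,
`binom(⌊αn⌋, k-2) · k^{k-2} · (n-k)^{⌊αn⌋-k} · (n-⌊αn⌋-1) · n / n^{⌊αn⌋}
  → (1-α) α^{k-2} (k^{k-2}/(k-2)!) e^{-αk}`. -/
theorem tagged_cluster_limit (k : ℕ) (hk : 2 ≤ k) (α : ℝ) (hα : α ∈ Set.Ioo (0 : ℝ) 1) :
    Tendsto (fun n : ℕ =>
        ((((⌊α * n⌋₊).choose (k - 2) * k ^ (k - 2) * (n - k) ^ (⌊α * n⌋₊ - k)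
            * (n - ⌊α * n⌋₊ - 1) * n : ℕ)) : ℝ) / (n : ℝ) ^ ⌊α * n⌋₊)
      atTop
      (𝓝 ((1 - α) * α ^ (k - 2) * ((k : ℝ) ^ (k - 2) / (Nat.factorial (k - 2)))
        * Real.exp (-(α * k)))) := by
  obtain ⟨hα0, hα1⟩ := hα
  have hfloor : Tendsto (fun n : ℕ => (⌊α * n⌋₊ : ℝ) / n) atTop (𝓝 α) :=
    (tendsto_nat_floor_mul_div_atTop hα0.le).comp tendsto_natCast_atTop_atTop
  have hfloor_le : ∀ᶠ n : ℕ in atTop, ⌊α * n⌋₊ ≤ n :=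
    Eventually.of_forall fun n => Nat.floor_le_of_le (mul_le_of_le_one_left n.cast_nonneg hα1.le)
  have hfloor_ge : ∀ᶠ n : ℕ in atTop, k ≤ ⌊α * n⌋₊ :=
    (tendsto_nat_floor_atTop.comp
      (tendsto_natCast_atTop_atTop.const_mul_atTop hα0)).eventually_ge_atTop k
  have hlim := (((tendsto_choose_div_pow hfloor (k - 2)).mul_const ((k : ℝ) ^ (k - 2))).mul
    (tendsto_one_add_div_pow (tendsto_natCast_sub_div hfloor k) (-(k : ℝ)))).mul
    (tendsto_natCast_sub_div (tendsto_natCast_self_sub_div hfloor hfloor_le) 1)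
  rw [show (1 - α) * α ^ (k - 2) * ((k : ℝ) ^ (k - 2) / (Nat.factorial (k - 2)))
      * Real.exp (-(α * k)) = α ^ (k - 2) / (Nat.factorial (k - 2)) * (k : ℝ) ^ (k - 2)
      * Real.exp (α * -(k : ℝ)) * (1 - α) by rw [mul_neg]; ring]
  refine hlim.congr' ?_
  filter_upwards [hfloor_ge, eventually_ge_atTop k, eventually_gt_atTop 0] with n hkm hkn hn
  exact (cast_tagged_cluster_div_pow_eq hk hkm hkn hn.ne').symm

end Parking
end
end
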